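/- arXiv:2202.04481 — 3 statements merged into one kernel-verified Lean document; each statement's English description precedes it below -/
import Mathlib

section
/- Fix a finite alphabet A with |A| = J. If a ≥ √(2 + 2J), then for every probability distribution p on A and every positive integer n, the total probability under the i.i.d. product measure p^n of all source sequences whose type t satisfies ‖t − p‖₂ > a·√(ln n / n) is at most e^{J−1}/n²; i.e., Σ_{t ∈ P_n(A) : ‖t−p‖₂ > a√(ln n/n)} p^n(T_A^n(t)) ≤ e^{J−1}/n². -/
open Filter MeasureTheory
open scoped BigOperators

noncomputable section

variable {A B : Type*}

/-- `p` is a probability distribution on the finite alphabet `A`. -/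
def IsProb [Fintype A] (p : A → ℝ) : Prop :=
  (∀ a, 0 ≤ p a) ∧ ∑ a, p a = 1

/-- `Q` is a conditional probability distribution from `A` to `B`. -/
def IsCondProb [Fintype A] [Fintype B] (Q : A → B → ℝ) : Prop :=
  ∀ j, IsProb (Q j)

/-- `ρ` is a distortion measure in the class `D`: bounded in `[0, ρmax]` and
with `max_j min_k ρ(j,k) = 0` (equivalently, every row contains a zero). -/
def IsDistMeasure [Fintype A] [Fintype B] (ρmax : ℝ) (ρ : A → B → ℝ) : Prop :=
  (∀ j k, 0 ≤ ρ j k ∧ ρ j k ≤ ρmax) ∧ ∀ j, ∃ k, ρ j k = 0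

/-- Mutual information `I(p, Q)` in nats. -/
def mutualInfo [Fintype A] [Fintype B] (p : A → ℝ) (Q : A → B → ℝ) : ℝ :=
  ∑ j, ∑ k, p j * Q j k * Real.log (Q j k / ∑ j', p j' * Q j' k)

/-- Average distortion `Σ_{j,k} p(j) Q(k|j) ρ(j,k)`. -/
def avgDist [Fintype A] [Fintype B] (p : A → ℝ) (Q : A → B → ℝ) (ρ : A → B → ℝ) : ℝ :=
  ∑ j, ∑ k, p j * Q j k * ρ j k

/-- The rate-distortion function `R(p,d,ρ)` in nats. -/
def RD [Fintype A] [Fintype B] (p : A → ℝ) (d : ℝ) (ρ : A → B → ℝ) : ℝ :=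
  sInf { r | ∃ Q, IsCondProb Q ∧ avgDist p Q ρ ≤ d ∧ r = mutualInfo p Q }

/-- The type (empirical distribution) of a sequence `x ∈ A^n`. -/
def typeOf [DecidableEq A] {n : ℕ} (x : Fin n → A) : A → ℝ :=
  fun a => ((Finset.univ.filter fun i => x i = a).card : ℝ) / n

/-- The i.i.d. product probability `p^n(x) = ∏ i p(x_i)`. -/
def prodProb {n : ℕ} (p : A → ℝ) (x : Fin n → A) : ℝ :=
  ∏ i, p (x i)

/-- The `n`-fold single-letter distortion `ρ_n(x,y) = (1/n) Σ_i ρ(x_i, y_i)`. -/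
def nDist {n : ℕ} (ρ : A → B → ℝ) (x : Fin n → A) (y : Fin n → B) : ℝ :=
  (∑ i, ρ (x i) (y i)) / n

/-- `E_p[R(T,d,ρ)]`, the expectation of the empirical rate-distortion function
over `X^n` i.i.d. `p` (written as a sum over sequences). -/
def expTypeRD [Fintype A] [DecidableEq A] [Fintype B] (n : ℕ) (p : A → ℝ)
    (d : ℝ) (ρ : A → B → ℝ) : ℝ :=
  ∑ x : Fin n → A, prodProb p x * RD (typeOf x) d ρ

lemma aux_log_le_one {r : ℝ} (h0 : 0 < r) (h1 : r ≤ 1) :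
    Real.log r ≤ r - 1 - (r - 1) ^ 2 / 2 := by
  set f : ℝ → ℝ := fun x => x - 1 - (x - 1) ^ 2 / 2 - Real.log x with hf
  have hder : ∀ x ∈ Set.Ioo r 1, HasDerivAt f ((1 - (2 * (x - 1) ^ 1 * 1) / 2) - x⁻¹) x := by
    intro x hx
    have hx0 : 0 < x := lt_trans h0 hx.1
    have h1' : HasDerivAt (fun y : ℝ => y - 1) 1 x := (hasDerivAt_id x).sub_const 1
    have h2 : HasDerivAt (fun y : ℝ => (y - 1) ^ 2 / 2) ((2 * (x - 1) ^ 1 * 1) / 2) x := by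
      exact_mod_cast (h1'.pow 2).div_const 2
    exact (h1'.sub h2).sub (Real.hasDerivAt_log (ne_of_gt hx0))
  have key : AntitoneOn f (Set.Icc r 1) := by
    have hint : interior (Set.Icc r 1) = Set.Ioo r 1 := interior_Icc
    apply antitoneOn_of_deriv_nonpos (convex_Icc r 1)
    · apply ContinuousOn.sub
      · fun_prop
      · exact Real.continuousOn_log.mono (fun x hx => by
          simp only [Set.mem_compl_iff, Set.mem_singleton_iff]
          exact ne_of_gt (lt_of_lt_of_le h0 hx.1))
    · rw [hint]
      exact fun x hx => ((hder x hx).differentiableAt).differentiableWithinAt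
    · rw [hint]
      intro x hx
      rw [(hder x hx).deriv]
      have hx0 : 0 < x := lt_trans h0 hx.1
      have heq : (1 - (2 * (x - 1) ^ 1 * 1) / 2) - x⁻¹ = -((x - 1) ^ 2) / x := by
        field_simp; ring
      rw [heq]
      apply div_nonpos_of_nonpos_of_nonneg (by nlinarith [sq_nonneg (x - 1)]) hx0.le
  have h := key (Set.mem_Icc.mpr ⟨le_refl r, h1⟩) (Set.mem_Icc.mpr ⟨h1, le_refl 1⟩) h1
  simp only [hf, Real.log_one] at h
  norm_num at h
  linarith

lemma aux_log_ge_one {r : ℝ} (h1 : 1 ≤ r) :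
    Real.log r ≤ r - 1 - (r - 1) ^ 2 / (2 * r) := by
  set f : ℝ → ℝ := fun x => x - 1 - (x - 1) ^ 2 / (2 * x) - Real.log x with hf
  have hder : ∀ x ∈ Set.Ioo 1 r, HasDerivAt f
      ((1 - ((2 * (x - 1) ^ 1 * 1) * (2 * x) - (x - 1) ^ 2 * 2) / (2 * x) ^ 2) - x⁻¹) x := by
    intro x hx
    have hx0 : (0:ℝ) < x := lt_trans one_pos hx.1
    have h1' : HasDerivAt (fun y : ℝ => y - 1) 1 x := (hasDerivAt_id x).sub_const 1
    have hsq : HasDerivAt (fun y : ℝ => (y - 1) ^ 2) (2 * (x - 1) ^ 1 * 1) x := by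
      exact_mod_cast h1'.pow 2
    have hden : HasDerivAt (fun y : ℝ => 2 * y) 2 x := by
      simpa using (hasDerivAt_id x).const_mul (2:ℝ)
    have hdiv : HasDerivAt (fun y : ℝ => (y - 1) ^ 2 / (2 * y))
        (((2 * (x - 1) ^ 1 * 1) * (2 * x) - (x - 1) ^ 2 * 2) / (2 * x) ^ 2) x :=
      hsq.div hden (by positivity)
    exact (h1'.sub hdiv).sub (Real.hasDerivAt_log (ne_of_gt hx0))
  have key : MonotoneOn f (Set.Icc 1 r) := by
    have hint : interior (Set.Icc 1 r) = Set.Ioo 1 r := interior_Icc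
    apply monotoneOn_of_deriv_nonneg (convex_Icc 1 r)
    · apply ContinuousOn.sub
      · apply ContinuousOn.sub
        · fun_prop
        · apply ContinuousOn.div (by fun_prop) (by fun_prop)
          intro x hx
          have hx0 : (0:ℝ) < x := lt_of_lt_of_le one_pos hx.1
          positivity
      · exact Real.continuousOn_log.mono (fun x hx => by
          simp only [Set.mem_compl_iff, Set.mem_singleton_iff]
          exact ne_of_gt (lt_of_lt_of_le one_pos hx.1))
    · rw [hint]
      exact fun x hx => ((hder x hx).differentiableAt).differentiableWithinAt
    · rw [hint]
      intro x hx
      rw [(hder x hx).deriv]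
      have hx0 : (0:ℝ) < x := lt_trans one_pos hx.1
      have heq : (1 - ((2 * (x - 1) ^ 1 * 1) * (2 * x) - (x - 1) ^ 2 * 2) / (2 * x) ^ 2) - x⁻¹
          = (x - 1) ^ 2 / (2 * x ^ 2) := by
        field_simp; ring
      rw [heq]; positivity
  have h := key (Set.mem_Icc.mpr ⟨le_refl 1, h1⟩) (Set.mem_Icc.mpr ⟨h1, le_refl r⟩) h1
  simp only [hf, Real.log_one] at h
  norm_num at h
  linarith

lemma aux_pointwise {t p : ℝ} (ht0 : 0 ≤ t) (ht1 : t ≤ 1) (hp0 : 0 < p) (hp1 : p ≤ 1) :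
    (t - p) + (t - p) ^ 2 / 2 ≤ t * Real.log (t / p) := by
  rcases eq_or_lt_of_le ht0 with rfl | ht0
  · simp only [zero_div, Real.log_zero, mul_zero]
    nlinarith
  · have hlog : Real.log (t / p) = -Real.log (p / t) := by
      rw [Real.log_div (ne_of_gt ht0) (ne_of_gt hp0), Real.log_div (ne_of_gt hp0) (ne_of_gt ht0)]
      ring
    rw [hlog]
    rcases le_total t p with hc | hc
    · have hr : 1 ≤ p / t := (one_le_div ht0).mpr hc
      have h := mul_le_mul_of_nonneg_left (aux_log_ge_one hr) ht0.le
      have heq : t * (p / t - 1 - (p / t - 1) ^ 2 / (2 * (p / t)))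
          = p - t - (p - t) ^ 2 / (2 * p) := by
        field_simp
      rw [heq] at h
      have hfrac : (p - t) ^ 2 / 2 ≤ (p - t) ^ 2 / (2 * p) :=
        div_le_div_of_nonneg_left (sq_nonneg _) (by positivity) (by nlinarith)
      have hsq : (t - p) ^ 2 = (p - t) ^ 2 := by ring
      rw [hsq]
      nlinarith
    · have hr0 : 0 < p / t := div_pos hp0 ht0
      have hr1 : p / t ≤ 1 := (div_le_one ht0).mpr hc
      have h := mul_le_mul_of_nonneg_left (aux_log_le_one hr0 hr1) ht0.le
      have heq : t * (p / t - 1 - (p / t - 1) ^ 2 / 2)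
          = p - t - (p - t) ^ 2 / (2 * t) := by
        field_simp
      rw [heq] at h
      have hfrac : (p - t) ^ 2 / 2 ≤ (p - t) ^ 2 / (2 * t) :=
        div_le_div_of_nonneg_left (sq_nonneg _) (by positivity) (by nlinarith)
      have hsq : (t - p) ^ 2 = (p - t) ^ 2 := by ring
      rw [hsq]
      nlinarith

/-- Lemma 1: if `a ≥ √(2 + 2J)`, then for all `p ∈ P(A)` and all `n`,
the probability that the type of an i.i.d. `p` sequence is farther than
`a √(ln n / n)` from `p` in Euclidean distance is at most `e^{J-1}/n²`. -/
theorem type_concentration (J : ℕ) (hJ : 0 < J) (a : ℝ)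
    (ha : Real.sqrt (2 + 2 * (J : ℝ)) ≤ a)
    (p : Fin J → ℝ) (hp : IsProb p) (n : ℕ) (hn : 0 < n) :
    (∑ x : Fin n → Fin J,
        if a * Real.sqrt (Real.log n / n) < Real.sqrt (∑ j, (typeOf x j - p j) ^ 2)
        then prodProb p x else 0)
      ≤ Real.exp ((J : ℝ) - 1) / (n : ℝ) ^ 2 := by
  obtain ⟨m, rfl⟩ : ∃ m, J = m + 1 := ⟨J - 1, (Nat.succ_pred_eq_of_pos hJ).symm⟩
  have hN : (0:ℝ) < (n:ℝ) := by exact_mod_cast hn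
  have hn1 : (1:ℝ) ≤ (n:ℝ) := by exact_mod_cast hn
  set cnt : (Fin n → Fin (m+1)) → (Fin (m+1) → ℕ) :=
    fun x j => (Finset.univ.filter fun i => x i = j).card with hcnt
  have hsum_cnt : ∀ x, ∑ j, cnt x j = n := by
    intro x
    have h := Finset.card_eq_sum_card_fiberwise
      (f := x) (s := Finset.univ) (t := Finset.univ) (fun i _ => Finset.mem_univ (x i))
    simpa [hcnt] using h.symm
  have hcnt_le : ∀ x j, cnt x j ≤ n := by
    intro x j
    have h := Finset.card_filter_le (Finset.univ : Finset (Fin n)) (fun i => x i = j)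
    simpa [hcnt] using h
  have htype : ∀ x, typeOf x = fun j => (cnt x j : ℝ) / n := fun x => rfl
  have hprod : ∀ (q : Fin (m+1) → ℝ) (x : Fin n → Fin (m+1)),
      prodProb q x = ∏ j, q j ^ cnt x j := by
    intro q x
    rw [prodProb, ← Finset.prod_fiberwise_of_maps_to
      (g := x) (fun i _ => Finset.mem_univ (x i)) (fun i => q (x i))]
    refine Finset.prod_congr rfl (fun j _ => ?_)
    have hfil : ∀ i ∈ Finset.univ.filter (fun i => x i = j), q (x i) = q j :=
      fun i hi => congrArg q (Finset.mem_filter.mp hi).2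
    rw [Finset.prod_congr rfl hfil, Finset.prod_const]
  have htnn : ∀ (x : Fin n → Fin (m+1)) j, 0 ≤ typeOf x j := by
    intro x j; rw [htype]; positivity
  have hqnn : ∀ x : Fin n → Fin (m+1), 0 ≤ prodProb (typeOf x) x := by
    intro x
    exact Finset.prod_nonneg (fun i _ => htnn x (x i))
  -- Step 1 : pointwise bound
  have step1 : ∀ x : Fin n → Fin (m+1),
      (if a * Real.sqrt (Real.log n / n) < Real.sqrt (∑ j, (typeOf x j - p j) ^ 2)
        then prodProb p x else 0)
      ≤ prodProb (typeOf x) x * (((n:ℝ) ^ (m+2))⁻¹) := by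
    intro x
    split_ifs with hcond
    swap
    · exact mul_nonneg (hqnn x) (by positivity)
    by_cases hz : ∀ j, cnt x j ≠ 0 → 0 < p j
    swap
    · push_neg at hz
      obtain ⟨j, hj0, hjp⟩ := hz
      have hpj : p j = 0 := le_antisymm hjp (hp.1 j)
      have hzero : prodProb p x = 0 := by
        rw [hprod]
        exact Finset.prod_eq_zero (Finset.mem_univ j) (by rw [hpj]; exact zero_pow hj0)
      rw [hzero]
      exact mul_nonneg (hqnn x) (by positivity)
    set D : ℝ := ∑ j, typeOf x j * Real.log (typeOf x j / p j) with hD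
    have key1 : prodProb p x = prodProb (typeOf x) x * Real.exp (-((n:ℝ) * D)) := by
      have hexp : Real.exp (-((n:ℝ) * D))
          = ∏ j, Real.exp (-((n:ℝ) * (typeOf x j * Real.log (typeOf x j / p j)))) := by
        rw [← Real.exp_sum]
        congr 1
        rw [hD, Finset.mul_sum, ← Finset.sum_neg_distrib]
      rw [hprod p x, hprod (typeOf x) x, hexp, ← Finset.prod_mul_distrib]
      refine Finset.prod_congr rfl (fun j _ => ?_)
      by_cases hc : cnt x j = 0
      · have ht0 : typeOf x j = 0 := by rw [htype]; simp [hc]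
        simp [hc, ht0]
      · have hpj := hz j hc
        have htj : (0:ℝ) < typeOf x j := by
          rw [htype]
          exact div_pos (by exact_mod_cast Nat.pos_of_ne_zero hc) hN
        have hnt : (n:ℝ) * typeOf x j = (cnt x j : ℝ) := by
          rw [htype]
          field_simp
        have hlog : Real.log (typeOf x j / p j)
            = Real.log (typeOf x j) - Real.log (p j) :=
          Real.log_div (ne_of_gt htj) (ne_of_gt hpj)
        have harg : -((n:ℝ) * (typeOf x j * Real.log (typeOf x j / p j)))
            = (cnt x j : ℝ) * Real.log (p j) - (cnt x j : ℝ) * Real.log (typeOf x j) := by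
          rw [hlog, ← hnt]
          ring
        rw [harg, Real.exp_sub, Real.exp_nat_mul, Real.exp_nat_mul,
          Real.exp_log hpj, Real.exp_log htj]
        rw [mul_comm, div_mul_cancel₀]
        exact pow_ne_zero _ (ne_of_gt htj)
    have hp1 : ∀ j, p j ≤ 1 := by
      intro j
      rw [← hp.2]
      exact Finset.single_le_sum (fun j _ => hp.1 j) (Finset.mem_univ j)
    have ht1 : ∀ j, typeOf x j ≤ 1 := by
      intro j
      rw [htype, div_le_one hN]
      exact_mod_cast hcnt_le x j
    have hsumt : ∑ j, typeOf x j = 1 := by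
      rw [htype, ← Finset.sum_div]
      have hsc : ∑ j, (cnt x j : ℝ) = (n:ℝ) := by exact_mod_cast hsum_cnt x
      rw [hsc]
      exact div_self (ne_of_gt hN)
    have hpins : (∑ j, (typeOf x j - p j) ^ 2) / 2 ≤ D := by
      have h0 : ∀ j : Fin (m+1),
          (typeOf x j - p j) + (typeOf x j - p j) ^ 2 / 2
            ≤ typeOf x j * Real.log (typeOf x j / p j) := by
        intro j
        by_cases hpz : p j = 0
        · have hc : cnt x j = 0 := by
            by_contra hc
            exact absurd hpz (ne_of_gt (hz j hc))
          have ht0 : typeOf x j = 0 := by rw [htype]; simp [hc]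
          simp [hpz, ht0]
        · exact aux_pointwise (htnn x j) (ht1 j)
            (lt_of_le_of_ne (hp.1 j) (Ne.symm hpz)) (hp1 j)
      have hsum := Finset.sum_le_sum (fun j (_ : j ∈ Finset.univ) => h0 j)
      rw [Finset.sum_add_distrib, Finset.sum_sub_distrib, hsumt, hp.2, ← hD] at hsum
      rw [Finset.sum_div]
      linarith
    have hS : a ^ 2 * (Real.log n / n) < ∑ j, (typeOf x j - p j) ^ 2 := by
      have ha0 : 0 ≤ a := le_trans (Real.sqrt_nonneg _) ha
      have hq0 : 0 ≤ Real.log n / n := div_nonneg (Real.log_nonneg hn1) hN.le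
      have hsq0 : 0 ≤ ∑ j, (typeOf x j - p j) ^ 2 :=
        Finset.sum_nonneg (fun j _ => sq_nonneg _)
      have h2 := mul_self_lt_mul_self (mul_nonneg ha0 (Real.sqrt_nonneg _)) hcond
      rwa [Real.mul_self_sqrt hsq0,
        show a * Real.sqrt (Real.log n / n) * (a * Real.sqrt (Real.log n / n))
          = a ^ 2 * (Real.sqrt (Real.log n / n) * Real.sqrt (Real.log n / n)) by ring,
        Real.mul_self_sqrt hq0] at h2
    have ha2 : 2 + 2 * ((m:ℝ) + 1) ≤ a ^ 2 := by
      have h0 : (0:ℝ) ≤ 2 + 2 * ((m:ℝ) + 1) := by positivity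
      have hs := Real.sq_sqrt h0
      have hs0 := Real.sqrt_nonneg (2 + 2 * ((m:ℝ) + 1))
      have ha' : Real.sqrt (2 + 2 * ((m:ℝ) + 1)) ≤ a := by push_cast at ha; exact ha
      nlinarith [ha', hs, hs0]
    have hlogn : 0 ≤ Real.log n := Real.log_nonneg hn1
    have key2 : Real.exp (-((n:ℝ) * D)) ≤ ((n:ℝ) ^ (m+2))⁻¹ := by
      have h1 : a ^ 2 * Real.log n ≤ (n:ℝ) * (∑ j, (typeOf x j - p j) ^ 2) := by
        have := hS.le
        rw [mul_div_assoc'] at this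
        calc a ^ 2 * Real.log n = (a ^ 2 * Real.log n / n) * n := by field_simp
          _ ≤ (∑ j, (typeOf x j - p j) ^ 2) * n :=
              mul_le_mul_of_nonneg_right this hN.le
          _ = (n:ℝ) * (∑ j, (typeOf x j - p j) ^ 2) := by ring
      have h2 : ((m:ℝ) + 2) * Real.log n ≤ (n:ℝ) * D := by
        have h3 : (n:ℝ) * ((∑ j, (typeOf x j - p j) ^ 2) / 2) ≤ (n:ℝ) * D :=
          mul_le_mul_of_nonneg_left hpins hN.le
        nlinarith [hlogn, ha2]
      have h4 : -((n:ℝ) * D) ≤ -((((m+2:ℕ)):ℝ) * Real.log n) := by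
        push_cast
        linarith
      calc Real.exp (-((n:ℝ) * D)) ≤ Real.exp (-((((m+2:ℕ)):ℝ) * Real.log n)) :=
            Real.exp_le_exp.mpr h4
        _ = ((n:ℝ) ^ (m+2))⁻¹ := by
            rw [Real.exp_neg, Real.exp_nat_mul, Real.exp_log hN]
    rw [key1]
    exact mul_le_mul_of_nonneg_left key2 (hqnn x)
  -- Step 2 : total mass of all type-products is at most the number of types
  have hcard : ((Finset.univ.image cnt).card : ℕ) ≤ (n+1) ^ m := by
    have hinj : (Finset.univ.image cnt).card
        ≤ (Finset.univ : Finset (Fin m → Fin (n+1))).card := by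
      apply Finset.card_le_card_of_injOn
        (f := fun (c : Fin (m+1) → ℕ) (k : Fin m) =>
          (⟨min (c k.castSucc) n, Nat.lt_succ_of_le (min_le_right _ _)⟩ : Fin (n+1)))
      · exact fun c _ => Finset.mem_univ _
      · intro c hc c' hc' hF
        simp only [Finset.coe_image, Set.mem_image, Finset.mem_coe] at hc hc'
        obtain ⟨x, -, rfl⟩ := hc
        obtain ⟨x', -, rfl⟩ := hc'
        have hfirst : ∀ k : Fin m, cnt x k.castSucc = cnt x' k.castSucc := by
          intro k
          have h := congrFun hF k
          simp only [Fin.mk.injEq] at h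
          rwa [min_eq_left (hcnt_le x _), min_eq_left (hcnt_le x' _)] at h
        have hlast : cnt x (Fin.last m) = cnt x' (Fin.last m) := by
          have h1 := hsum_cnt x
          have h2 := hsum_cnt x'
          rw [Fin.sum_univ_castSucc] at h1 h2
          have h3 : ∑ k : Fin m, cnt x k.castSucc = ∑ k : Fin m, cnt x' k.castSucc :=
            Finset.sum_congr rfl (fun k _ => hfirst k)
          omega
        funext j
        exact Fin.lastCases hlast hfirst j
    simpa using hinj
  have step2 : ∑ x : Fin n → Fin (m+1), prodProb (typeOf x) x ≤ ((n:ℝ) + 1) ^ m := by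
    have hfib := Finset.sum_fiberwise_of_maps_to
      (g := cnt) (fun x (_ : x ∈ Finset.univ) =>
        Finset.mem_image_of_mem cnt (Finset.mem_univ x))
      (fun x => prodProb (typeOf x) x)
    rw [← hfib]
    have hinner : ∀ c ∈ Finset.univ.image cnt,
        (∑ x ∈ Finset.univ.filter (fun x => cnt x = c), prodProb (typeOf x) x) ≤ 1 := by
      intro c hc
      obtain ⟨x₀, -, hx₀⟩ := Finset.mem_image.mp hc
      set q : Fin (m+1) → ℝ := fun j => (c j : ℝ) / n with hq
      have hqj : ∀ j, 0 ≤ q j := by intro j; rw [hq]; positivity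
      have h1 : ∀ x ∈ Finset.univ.filter (fun x => cnt x = c),
          prodProb (typeOf x) x = prodProb q x := by
        intro x hx
        have hcx : cnt x = c := (Finset.mem_filter.mp hx).2
        rw [htype x, hq, ← hcx]
      rw [Finset.sum_congr rfl h1]
      have h2 : (∑ x ∈ Finset.univ.filter (fun x => cnt x = c), prodProb q x)
          ≤ ∑ x : Fin n → Fin (m+1), prodProb q x :=
        Finset.sum_le_sum_of_subset_of_nonneg (Finset.filter_subset _ _)
          (fun x _ _ => Finset.prod_nonneg (fun i _ => hqj (x i)))
      have hql : ∑ j, q j = 1 := by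
        rw [hq, ← Finset.sum_div]
        have hsc : ∑ j, (c j : ℝ) = (n:ℝ) := by
          rw [← hx₀]
          exact_mod_cast hsum_cnt x₀
        rw [hsc]
        exact div_self (ne_of_gt hN)
      have h3 : ∑ x : Fin n → Fin (m+1), prodProb q x = 1 := by
        have hps := Finset.prod_univ_sum (fun _ : Fin n => (Finset.univ : Finset (Fin (m+1))))
          (fun _ j => q j)
        rw [Fintype.piFinset_univ] at hps
        calc ∑ x : Fin n → Fin (m+1), prodProb q x
            = ∏ _i : Fin n, ∑ j, q j := hps.symm
          _ = 1 := by rw [hql]; simp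
      linarith
    calc (∑ c ∈ Finset.univ.image cnt,
          ∑ x ∈ Finset.univ.filter (fun x => cnt x = c), prodProb (typeOf x) x)
        ≤ ∑ _c ∈ Finset.univ.image cnt, (1:ℝ) := Finset.sum_le_sum hinner
      _ = ((Finset.univ.image cnt).card : ℝ) := by simp
      _ ≤ ((n:ℝ) + 1) ^ m := by
          exact_mod_cast Nat.cast_le.mpr hcard |>.trans_eq (by push_cast; ring)
  -- combine
  have hstep : (∑ x : Fin n → Fin (m+1),
        if a * Real.sqrt (Real.log n / n) < Real.sqrt (∑ j, (typeOf x j - p j) ^ 2)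
        then prodProb p x else 0)
      ≤ ((n:ℝ) + 1) ^ m * ((n:ℝ) ^ (m+2))⁻¹ := by
    calc (∑ x : Fin n → Fin (m+1),
          if a * Real.sqrt (Real.log n / n) < Real.sqrt (∑ j, (typeOf x j - p j) ^ 2)
          then prodProb p x else 0)
        ≤ ∑ x : Fin n → Fin (m+1), prodProb (typeOf x) x * ((n:ℝ) ^ (m+2))⁻¹ :=
          Finset.sum_le_sum (fun x _ => step1 x)
      _ = (∑ x : Fin n → Fin (m+1), prodProb (typeOf x) x) * ((n:ℝ) ^ (m+2))⁻¹ :=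
          (Finset.sum_mul _ _ _).symm
      _ ≤ ((n:ℝ) + 1) ^ m * ((n:ℝ) ^ (m+2))⁻¹ :=
          mul_le_mul_of_nonneg_right step2 (by positivity)
  refine hstep.trans ?_
  have hne : ((n:ℝ) + 1) ^ m ≤ (Real.exp 1 * n) ^ m := by
    apply pow_le_pow_left₀ (by positivity)
    nlinarith [Real.add_one_le_exp (1:ℝ), hn1]
  have heq : (Real.exp 1 * (n:ℝ)) ^ m * ((n:ℝ) ^ (m+2))⁻¹
      = Real.exp ((((m+1:ℕ)):ℝ) - 1) / (n:ℝ) ^ 2 := by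
    rw [mul_pow, Real.exp_one_pow]
    rw [show (((m+1:ℕ)):ℝ) - 1 = (m:ℝ) by push_cast; ring]
    rw [pow_add]
    field_simp
  calc ((n:ℝ) + 1) ^ m * ((n:ℝ) ^ (m+2))⁻¹
      ≤ (Real.exp 1 * (n:ℝ)) ^ m * ((n:ℝ) ^ (m+2))⁻¹ :=
        mul_le_mul_of_nonneg_right hne (by positivity)
    _ = Real.exp ((((m+1:ℕ)):ℝ) - 1) / (n:ℝ) ^ 2 := heq
end
end

section
/- For every fixed distortion level d > 0, the map (p, ρ) ↦ R(p, d, ρ) is uniformly continuous on P(A) × D, where P(A) × D is equipped with the metric ‖(p₁,ρ₁) − (p₂,ρ₂)‖ = √( Σ_{j∈A}(p₁(j)−p₂(j))² + Σ_{j∈A,k∈B}(ρ₁(j,k)−ρ₂(j,k))² ). -/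
open Filter MeasureTheory
open scoped BigOperators

noncomputable section

variable {A B : Type*}

namespace RDproofAux

open Finset

lemma prob_entry_le_one {n : ℕ} {p : Fin n → ℝ} (hp : IsProb p) (a : Fin n) : p a ≤ 1 := by
  have h := Finset.single_le_sum (fun i (_ : i ∈ Finset.univ) => hp.1 i) (Finset.mem_univ a)
  rw [hp.2] at h
  exact h

lemma marginal_sum_eq_one {J K : ℕ} {p : Fin J → ℝ} {Q : Fin J → Fin K → ℝ}
    (hp : IsProb p) (hQ : IsCondProb Q) :
    ∑ k, ∑ j', p j' * Q j' k = 1 := by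
  rw [Finset.sum_comm]
  have h : ∀ j ∈ Finset.univ, ∑ k, p j * Q j k = p j := by
    intro j _
    rw [← Finset.mul_sum, (hQ j).2, mul_one]
  rw [Finset.sum_congr rfl h, hp.2]

lemma marginal_nonneg {J K : ℕ} {p : Fin J → ℝ} {Q : Fin J → Fin K → ℝ}
    (hp : IsProb p) (hQ : IsCondProb Q) (k : Fin K) :
    0 ≤ ∑ j', p j' * Q j' k :=
  Finset.sum_nonneg fun j _ => mul_nonneg (hp.1 j) ((hQ j).1 k)

/-- Gibbs inequality: mutual information is nonnegative. -/
lemma mutualInfo_nonneg {J K : ℕ} {p : Fin J → ℝ} {Q : Fin J → Fin K → ℝ}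
    (hp : IsProb p) (hQ : IsCondProb Q) : 0 ≤ mutualInfo p Q := by
  have key : ∀ j k, -(p j * Q j k * Real.log (Q j k / ∑ j', p j' * Q j' k))
      ≤ p j * (∑ j', p j' * Q j' k) - p j * Q j k := by
    intro j k
    set m := ∑ j', p j' * Q j' k with hm
    have hm0 : 0 ≤ m := marginal_nonneg hp hQ k
    rcases eq_or_lt_of_le (mul_nonneg (hp.1 j) ((hQ j).1 k)) with h0 | hpos
    · rw [← h0]
      simp only [zero_mul, neg_zero, sub_zero]
      exact mul_nonneg (hp.1 j) hm0
    · have hQpos : 0 < Q j k := by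
        rcases lt_or_eq_of_le ((hQ j).1 k) with h | h
        · exact h
        · exfalso; rw [← h, mul_zero] at hpos; exact lt_irrefl 0 hpos
      have hmpos : 0 < m := lt_of_lt_of_le hpos
        (Finset.single_le_sum (fun i (_ : i ∈ Finset.univ) =>
          mul_nonneg (hp.1 i) ((hQ i).1 k)) (Finset.mem_univ j))
      have hlog : Real.log (Q j k / m) = - Real.log (m / Q j k) := by
        rw [← Real.log_inv, inv_div]
      rw [hlog, mul_neg, neg_neg]
      calc p j * Q j k * Real.log (m / Q j k)
          ≤ p j * Q j k * (m / Q j k - 1) :=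
            mul_le_mul_of_nonneg_left
              (Real.log_le_sub_one_of_pos (div_pos hmpos hQpos)) hpos.le
        _ = p j * m - p j * Q j k := by
            field_simp
  have h1 : -(mutualInfo p Q) ≤ ∑ j, ∑ k, (p j * (∑ j', p j' * Q j' k) - p j * Q j k) := by
    have h2 : -(mutualInfo p Q)
        = ∑ j, ∑ k, -(p j * Q j k * Real.log (Q j k / ∑ j', p j' * Q j' k)) := by
      simp [mutualInfo, Finset.sum_neg_distrib]
    rw [h2]
    exact Finset.sum_le_sum fun j _ => Finset.sum_le_sum fun k _ => key j k
  have h3 : ∑ j, ∑ k, (p j * (∑ j', p j' * Q j' k) - p j * Q j k) = 0 := by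
    have e1 : ∀ j ∈ Finset.univ, ∑ k, (p j * (∑ j', p j' * Q j' k) - p j * Q j k)
        = p j * (∑ k, ∑ j', p j' * Q j' k) - p j * (∑ k, Q j k) := by
      intro j _
      rw [Finset.sum_sub_distrib, ← Finset.mul_sum, ← Finset.mul_sum]
    rw [Finset.sum_congr rfl e1]
    have e2 : ∀ j ∈ Finset.univ,
        p j * (∑ k, ∑ j', p j' * Q j' k) - p j * (∑ k, Q j k) = (0 : ℝ) := by
      intro j _
      rw [marginal_sum_eq_one hp hQ, (hQ j).2]
      ring
    rw [Finset.sum_congr rfl e2, Finset.sum_const, smul_zero]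
  linarith

/-- The globally continuous extension of mutual information. -/
def Fmi (J K : ℕ) (x : (Fin J → ℝ) × (Fin J → Fin K → ℝ)) : ℝ :=
  (∑ j, ∑ k, x.1 j * (x.2 j k * Real.log (x.2 j k)))
    - ∑ k, (∑ j, x.1 j * x.2 j k) * Real.log (∑ j, x.1 j * x.2 j k)

lemma mutualInfo_eq_Fmi {J K : ℕ} {p : Fin J → ℝ} {Q : Fin J → Fin K → ℝ}
    (hp : IsProb p) (hQ : IsCondProb Q) : mutualInfo p Q = Fmi J K (p, Q) := by
  have key : ∀ j k, p j * Q j k * Real.log (Q j k / ∑ j', p j' * Q j' k)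
      = p j * (Q j k * Real.log (Q j k))
        - p j * Q j k * Real.log (∑ j', p j' * Q j' k) := by
    intro j k
    rcases eq_or_lt_of_le (mul_nonneg (hp.1 j) ((hQ j).1 k)) with h0 | hpos
    · rcases mul_eq_zero.1 h0.symm with hp0 | hq0
      · simp [hp0]
      · simp [hq0]
    · have hQpos : 0 < Q j k := by
        rcases lt_or_eq_of_le ((hQ j).1 k) with h | h
        · exact h
        · exfalso; rw [← h, mul_zero] at hpos; exact lt_irrefl 0 hpos
      have hmpos : 0 < ∑ j', p j' * Q j' k := lt_of_lt_of_le hpos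
        (Finset.single_le_sum (fun i (_ : i ∈ Finset.univ) =>
          mul_nonneg (hp.1 i) ((hQ i).1 k)) (Finset.mem_univ j))
      rw [Real.log_div (ne_of_gt hQpos) (ne_of_gt hmpos)]
      ring
  rw [mutualInfo, Fmi]
  simp only [key]
  have e1 : (∑ j, ∑ k, (p j * (Q j k * Real.log (Q j k))
        - p j * Q j k * Real.log (∑ j', p j' * Q j' k)))
      = (∑ j, ∑ k, p j * (Q j k * Real.log (Q j k)))
        - ∑ j, ∑ k, p j * Q j k * Real.log (∑ j', p j' * Q j' k) := by
    rw [← Finset.sum_sub_distrib]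
    exact Finset.sum_congr rfl fun j _ => by rw [Finset.sum_sub_distrib]
  rw [e1]
  congr 1
  rw [Finset.sum_comm]
  exact Finset.sum_congr rfl fun k _ => (Finset.sum_mul _ _ _).symm

lemma continuous_Fmi (J K : ℕ) : Continuous (Fmi J K) := by
  have hphi : Continuous fun x : ℝ => x * Real.log x := Real.continuous_mul_log
  apply Continuous.sub
  · apply continuous_finset_sum
    intro j _
    apply continuous_finset_sum
    intro k _
    exact ((continuous_apply j).comp continuous_fst).mul
      (hphi.comp ((continuous_apply k).comp ((continuous_apply j).comp continuous_snd)))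
  · apply continuous_finset_sum
    intro k _
    exact hphi.comp (continuous_finset_sum _ fun j _ =>
      ((continuous_apply j).comp continuous_fst).mul
        ((continuous_apply k).comp ((continuous_apply j).comp continuous_snd)))

lemma isCompact_isProb (n : ℕ) : IsCompact {p : Fin n → ℝ | IsProb p} := by
  apply Metric.isCompact_of_isClosed_isBounded
  · have e : {p : Fin n → ℝ | IsProb p}
        = (⋂ a, {p : Fin n → ℝ | 0 ≤ p a}) ∩ {p : Fin n → ℝ | ∑ a, p a = 1} := by
      ext p; simp [IsProb, Set.mem_iInter]
    rw [e]
    exact IsClosed.inter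
      (isClosed_iInter fun a => isClosed_le continuous_const (continuous_apply a))
      (isClosed_eq (continuous_finset_sum _ fun a _ => continuous_apply a) continuous_const)
  · refine isBounded_iff_forall_norm_le.2 ⟨1, fun p hp => ?_⟩
    refine (pi_norm_le_iff_of_nonneg zero_le_one).2 fun a => ?_
    rw [Real.norm_eq_abs, abs_le]
    exact ⟨by linarith [hp.1 a], prob_entry_le_one hp a⟩

lemma isCompact_S (J K : ℕ) :
    IsCompact {x : (Fin J → ℝ) × (Fin J → Fin K → ℝ) | IsProb x.1 ∧ IsCondProb x.2} := by
  have e : {x : (Fin J → ℝ) × (Fin J → Fin K → ℝ) | IsProb x.1 ∧ IsCondProb x.2}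
      = {p : Fin J → ℝ | IsProb p} ×ˢ
        (Set.univ.pi fun _ : Fin J => {q : Fin K → ℝ | IsProb q}) := by
    ext x
    simp [IsCondProb, Set.mem_pi]
  rw [e]
  exact (isCompact_isProb J).prod (isCompact_univ_pi fun _ => isCompact_isProb K)

/-- The zero-distortion deterministic kernel. -/
lemma exists_zero_kernel {J K : ℕ} {ρ : Fin J → Fin K → ℝ} (h : ∀ j, ∃ k, ρ j k = 0) :
    ∃ Q₀ : Fin J → Fin K → ℝ, IsCondProb Q₀ ∧ (∀ j k, 0 ≤ Q₀ j k ∧ Q₀ j k ≤ 1) ∧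
      (∀ j k, Q₀ j k = 0 ∨ ρ j k = 0) := by
  refine ⟨fun j k => if k = Classical.choose (h j) then 1 else 0, ?_, ?_, ?_⟩
  · intro j
    constructor
    · intro k
      dsimp only
      split <;> norm_num
    · simp
  · intro j k
    dsimp only
    split <;> norm_num
  · intro j k
    dsimp only
    split
    · right
      rename_i hk
      rw [hk]
      exact Classical.choose_spec (h j)
    · left; rfl

lemma avgDist_zero_kernel {J K : ℕ} {p : Fin J → ℝ} {Q₀ : Fin J → Fin K → ℝ}
    {ρ : Fin J → Fin K → ℝ} (h : ∀ j k, Q₀ j k = 0 ∨ ρ j k = 0) :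
    avgDist p Q₀ ρ = 0 := by
  rw [avgDist]
  refine Finset.sum_eq_zero fun j _ => Finset.sum_eq_zero fun k _ => ?_
  rcases h j k with h0 | h0 <;> rw [h0] <;> ring

lemma avgDist_mix {J K : ℕ} (p : Fin J → ℝ) (Q₂ Q₀ : Fin J → Fin K → ℝ)
    (ρ : Fin J → Fin K → ℝ) (lam : ℝ) :
    avgDist p (fun j k => (1 - lam) * Q₂ j k + lam * Q₀ j k) ρ
      = (1 - lam) * avgDist p Q₂ ρ + lam * avgDist p Q₀ ρ := by
  simp only [avgDist, Finset.mul_sum, ← Finset.sum_add_distrib]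
  exact Finset.sum_congr rfl fun j _ => Finset.sum_congr rfl fun k _ => by ring

end RDproofAux

open RDproofAux in
/-- One-sided uniform bound for the rate-distortion function. -/
lemma RD_le_RD_add (J K : ℕ) (ρmax : ℝ) (hρmax : 0 < ρmax) (d : ℝ) (hd : 0 < d)
    (ε : ℝ) (hε : 0 < ε) :
    ∃ δ > 0, ∀ (p₁ p₂ : Fin J → ℝ) (ρ₁ ρ₂ : Fin J → Fin K → ℝ),
      IsProb p₁ → IsProb p₂ → IsDistMeasure ρmax ρ₁ → IsDistMeasure ρmax ρ₂ →
      (∀ j, |p₁ j - p₂ j| ≤ δ) → (∀ j k, |ρ₁ j k - ρ₂ j k| ≤ δ) →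
      RD p₁ d ρ₁ ≤ RD p₂ d ρ₂ + ε := by
  classical
  -- uniform continuity of Fmi on the compact set S
  set S : Set ((Fin J → ℝ) × (Fin J → Fin K → ℝ)) :=
    {x | IsProb x.1 ∧ IsCondProb x.2} with hS
  have hUC : UniformContinuousOn (Fmi J K) S :=
    (isCompact_S J K).uniformContinuousOn_of_continuous (continuous_Fmi J K).continuousOn
  rw [Metric.uniformContinuousOn_iff] at hUC
  obtain ⟨δ₀, hδ₀, hmod⟩ := hUC (ε / 2) (by linarith)
  set C : ℝ := (J : ℝ) * ρmax + 1 with hC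
  have hCpos : 0 < C := by positivity
  refine ⟨min (δ₀ / 2) (d * δ₀ / (2 * C)), by positivity, ?_⟩
  set δ : ℝ := min (δ₀ / 2) (d * δ₀ / (2 * C)) with hδdef
  intro p₁ p₂ ρ₁ ρ₂ hp₁ hp₂ hρ₁ hρ₂ hpc hρc
  have hδpos : 0 < δ := by positivity
  have hδle1 : δ ≤ δ₀ / 2 := min_le_left _ _
  have hδle2 : δ ≤ d * δ₀ / (2 * C) := min_le_right _ _
  set E : ℝ := C * δ with hE
  have hEpos : 0 < E := mul_pos hCpos hδpos
  have hEd : E / d ≤ δ₀ / 2 := by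
    rw [div_le_iff₀ hd]
    calc E = C * δ := rfl
      _ ≤ C * (d * δ₀ / (2 * C)) := mul_le_mul_of_nonneg_left hδle2 hCpos.le
      _ = δ₀ / 2 * d := by field_simp
  -- a near-optimal kernel for (p₂, ρ₂)
  obtain ⟨Q₀₂, hQ₀₂cp, _, hQ₀₂z⟩ := exists_zero_kernel hρ₂.2
  have hne₂ : {r | ∃ Q, IsCondProb Q ∧ avgDist p₂ Q ρ₂ ≤ d ∧ r = mutualInfo p₂ Q}.Nonempty :=
    ⟨mutualInfo p₂ Q₀₂, Q₀₂, hQ₀₂cp, by rw [avgDist_zero_kernel hQ₀₂z]; exact hd.le, rfl⟩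
  obtain ⟨r, hrmem, hrlt⟩ := Real.lt_sInf_add_pos hne₂ (show (0:ℝ) < ε / 2 by linarith)
  obtain ⟨Q₂, hQ₂cp, hQ₂feas, hrval⟩ := hrmem
  -- perturbation bound on average distortion
  have havg : avgDist p₁ Q₂ ρ₁ ≤ d + E := by
    have term : ∀ j k, p₁ j * Q₂ j k * ρ₁ j k
        ≤ p₂ j * Q₂ j k * ρ₂ j k + ((δ * ρmax) * Q₂ j k + (δ * p₂ j) * Q₂ j k) := by
      intro j k
      have h1 := abs_le.1 (hpc j)
      have h2 := abs_le.1 (hρc j k)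
      have hQnn : 0 ≤ Q₂ j k := (hQ₂cp j).1 k
      have hρnn : 0 ≤ ρ₁ j k := (hρ₁.1 j k).1
      have hρub : ρ₁ j k ≤ ρmax := (hρ₁.1 j k).2
      have hp2nn : 0 ≤ p₂ j := hp₂.1 j
      have A : (p₁ j - p₂ j) * (Q₂ j k * ρ₁ j k) ≤ δ * (Q₂ j k * ρmax) :=
        calc (p₁ j - p₂ j) * (Q₂ j k * ρ₁ j k)
            ≤ δ * (Q₂ j k * ρ₁ j k) :=
              mul_le_mul_of_nonneg_right h1.2 (mul_nonneg hQnn hρnn)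
          _ ≤ δ * (Q₂ j k * ρmax) :=
              mul_le_mul_of_nonneg_left
                (mul_le_mul_of_nonneg_left hρub hQnn) hδpos.le
      have B : (p₂ j * Q₂ j k) * (ρ₁ j k - ρ₂ j k) ≤ (p₂ j * Q₂ j k) * δ :=
        mul_le_mul_of_nonneg_left h2.2 (mul_nonneg hp2nn hQnn)
      nlinarith [A, B]
    calc avgDist p₁ Q₂ ρ₁
        ≤ ∑ j, ∑ k, (p₂ j * Q₂ j k * ρ₂ j k
            + ((δ * ρmax) * Q₂ j k + (δ * p₂ j) * Q₂ j k)) :=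
          Finset.sum_le_sum fun j _ => Finset.sum_le_sum fun k _ => term j k
      _ = avgDist p₂ Q₂ ρ₂ + ((J : ℝ) * (δ * ρmax) + δ) := by
          rw [avgDist]
          rw [show (∑ j, ∑ k, (p₂ j * Q₂ j k * ρ₂ j k
              + ((δ * ρmax) * Q₂ j k + (δ * p₂ j) * Q₂ j k)))
            = (∑ j : Fin J, ∑ k, p₂ j * Q₂ j k * ρ₂ j k)
              + ((∑ j : Fin J, ∑ k, (δ * ρmax) * Q₂ j k)
                + ∑ j : Fin J, ∑ k, (δ * p₂ j) * Q₂ j k) from by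
            rw [← Finset.sum_add_distrib, ← Finset.sum_add_distrib]
            exact Finset.sum_congr rfl fun j _ => by
              rw [← Finset.sum_add_distrib, ← Finset.sum_add_distrib]]
          congr 1
          have e1 : ∀ j ∈ Finset.univ, ∑ k, (δ * ρmax) * Q₂ j k = δ * ρmax := by
            intro j _
            rw [← Finset.mul_sum, (hQ₂cp j).2, mul_one]
          have e2 : ∀ j ∈ Finset.univ, ∑ k, (δ * p₂ j) * Q₂ j k = δ * p₂ j := by
            intro j _
            rw [← Finset.mul_sum, (hQ₂cp j).2, mul_one]
          rw [Finset.sum_congr rfl e1, Finset.sum_congr rfl e2, Finset.sum_const,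
            ← Finset.mul_sum, hp₂.2, Finset.card_univ, Fintype.card_fin]
          simp [nsmul_eq_mul]
      _ ≤ d + E := by
          have : (J : ℝ) * (δ * ρmax) + δ = E := by rw [hE, hC]; ring
          linarith [hQ₂feas]
  -- the mixed kernel
  obtain ⟨Q₀, hQ₀cp, hQ₀b, hQ₀z⟩ := exists_zero_kernel hρ₁.2
  set lam : ℝ := min 1 (E / d) with hlam
  have hlam0 : 0 ≤ lam := le_min zero_le_one (by positivity)
  have hlam1 : lam ≤ 1 := min_le_left _ _
  set Q : Fin J → Fin K → ℝ := fun j k => (1 - lam) * Q₂ j k + lam * Q₀ j k with hQdef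
  have hQcp : IsCondProb Q := by
    intro j
    constructor
    · intro k
      exact add_nonneg (mul_nonneg (by linarith) ((hQ₂cp j).1 k))
        (mul_nonneg hlam0 ((hQ₀cp j).1 k))
    · rw [show (∑ k, Q j k) = (1 - lam) * (∑ k, Q₂ j k) + lam * ∑ k, Q₀ j k from by
        rw [Finset.mul_sum, Finset.mul_sum, ← Finset.sum_add_distrib]]
      rw [(hQ₂cp j).2, (hQ₀cp j).2]
      ring
  have hQfeas : avgDist p₁ Q ρ₁ ≤ d := by
    rw [hQdef, avgDist_mix, avgDist_zero_kernel hQ₀z, mul_zero, add_zero]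
    have h1 : (1 - lam) * avgDist p₁ Q₂ ρ₁ ≤ (1 - lam) * (d + E) :=
      mul_le_mul_of_nonneg_left havg (by linarith)
    have h2 : (1 - lam) * (d + E) ≤ d := by
      rcases le_total 1 (E / d) with h | h
      · rw [hlam, min_eq_left h]
        simp
        linarith
      · rw [hlam, min_eq_right h]
        have e : (1 - E / d) * (d + E) = d - E ^ 2 / d := by
          field_simp
          ring
        rw [e]
        have : 0 ≤ E ^ 2 / d := by positivity
        linarith
    linarith
  -- bounding RD p₁ d ρ₁
  have hbdd₁ : BddBelow {r | ∃ Q, IsCondProb Q ∧ avgDist p₁ Q ρ₁ ≤ d ∧ r = mutualInfo p₁ Q} :=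
    ⟨0, fun r ⟨Q', hQ', _, hr'⟩ => hr' ▸ mutualInfo_nonneg hp₁ hQ'⟩
  have hRD₁ : RD p₁ d ρ₁ ≤ mutualInfo p₁ Q :=
    csInf_le hbdd₁ ⟨Q, hQcp, hQfeas, rfl⟩
  -- closeness in the metric
  have hmem1 : (p₁, Q) ∈ S := ⟨hp₁, hQcp⟩
  have hmem2 : (p₂, Q₂) ∈ S := ⟨hp₂, hQ₂cp⟩
  have hdist : dist (p₁, Q) (p₂, Q₂) < δ₀ := by
    rw [Prod.dist_eq]
    have hd1 : dist p₁ p₂ ≤ δ₀ / 2 := by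
      refine (dist_pi_le_iff (by linarith)).2 fun j => ?_
      rw [Real.dist_eq]
      exact le_trans (hpc j) hδle1
    have hd2 : dist Q Q₂ ≤ δ₀ / 2 := by
      refine (dist_pi_le_iff (by linarith)).2 fun j => ?_
      refine (dist_pi_le_iff (by linarith)).2 fun k => ?_
      rw [Real.dist_eq]
      have e : Q j k - Q₂ j k = lam * (Q₀ j k - Q₂ j k) := by
        rw [hQdef]; ring
      rw [e, abs_mul, abs_of_nonneg hlam0]
      have hb : |Q₀ j k - Q₂ j k| ≤ 1 := by
        have h1 := (hQ₀b j k).1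
        have h2 := (hQ₀b j k).2
        have h3 := (hQ₂cp j).1 k
        have h4 := prob_entry_le_one (hQ₂cp j) k
        rw [abs_le]
        constructor <;> linarith
      calc lam * |Q₀ j k - Q₂ j k| ≤ lam * 1 :=
            mul_le_mul_of_nonneg_left hb hlam0
        _ = lam := mul_one lam
        _ ≤ E / d := min_le_right _ _
        _ ≤ δ₀ / 2 := hEd
    exact lt_of_le_of_lt (max_le hd1 hd2) (by linarith)
  have hF := hmod _ hmem1 _ hmem2 hdist
  rw [Real.dist_eq, abs_sub_lt_iff] at hF
  have e1 : mutualInfo p₁ Q = Fmi J K (p₁, Q) := mutualInfo_eq_Fmi hp₁ hQcp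
  have e2 : mutualInfo p₂ Q₂ = Fmi J K (p₂, Q₂) := mutualInfo_eq_Fmi hp₂ hQ₂cp
  have : mutualInfo p₁ Q < mutualInfo p₂ Q₂ + ε / 2 := by
    rw [e1, e2]; linarith [hF.1]
  have hRD₂ : mutualInfo p₂ Q₂ < RD p₂ d ρ₂ + ε / 2 := by
    rw [← hrval]; exact hrlt
  linarith

/-- Lemma 2: for fixed `d > 0`, `(p,ρ) ↦ R(p,d,ρ)` is uniformly
continuous on `P(A) × D`, with respect to the metric
`‖(p₁,ρ₁) − (p₂,ρ₂)‖ = √(Σ_j (p₁(j)−p₂(j))² + Σ_{j,k} (ρ₁(j,k)−ρ₂(j,k))²)`. -/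
theorem RD_uniformly_continuous (J K : ℕ) (hJ : 0 < J) (hK : 0 < K)
    (ρmax : ℝ) (hρmax : 0 < ρmax) (d : ℝ) (hd : 0 < d) :
    ∀ ε > 0, ∃ δ > 0, ∀ (p₁ p₂ : Fin J → ℝ) (ρ₁ ρ₂ : Fin J → Fin K → ℝ),
      IsProb p₁ → IsProb p₂ → IsDistMeasure ρmax ρ₁ → IsDistMeasure ρmax ρ₂ →
      Real.sqrt (∑ j, (p₁ j - p₂ j) ^ 2 + ∑ j, ∑ k, (ρ₁ j k - ρ₂ j k) ^ 2) < δ →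
      |RD p₁ d ρ₁ - RD p₂ d ρ₂| < ε := by
  intro ε hε
  obtain ⟨δ, hδpos, H⟩ := RD_le_RD_add J K ρmax hρmax d hd (ε / 2) (by linarith)
  refine ⟨δ, hδpos, ?_⟩
  intro p₁ p₂ ρ₁ ρ₂ hp₁ hp₂ hρ₁ hρ₂ hclose
  -- coordinatewise bounds from the ℓ² bound
  have hsum1 : 0 ≤ ∑ j, (p₁ j - p₂ j) ^ 2 := Finset.sum_nonneg fun j _ => sq_nonneg _
  have hsum2 : 0 ≤ ∑ j, ∑ k, (ρ₁ j k - ρ₂ j k) ^ 2 :=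
    Finset.sum_nonneg fun j _ => Finset.sum_nonneg fun k _ => sq_nonneg _
  have hpc : ∀ j, |p₁ j - p₂ j| ≤ δ := by
    intro j
    have h1 : (p₁ j - p₂ j) ^ 2 ≤ ∑ j', (p₁ j' - p₂ j') ^ 2 :=
      Finset.single_le_sum (f := fun j' => (p₁ j' - p₂ j') ^ 2)
        (fun i _ => sq_nonneg _) (Finset.mem_univ j)
    calc |p₁ j - p₂ j| = Real.sqrt ((p₁ j - p₂ j) ^ 2) := (Real.sqrt_sq_eq_abs _).symm
      _ ≤ Real.sqrt (∑ j', (p₁ j' - p₂ j') ^ 2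
          + ∑ j', ∑ k', (ρ₁ j' k' - ρ₂ j' k') ^ 2) := Real.sqrt_le_sqrt (by linarith)
      _ ≤ δ := hclose.le
  have hρc : ∀ j k, |ρ₁ j k - ρ₂ j k| ≤ δ := by
    intro j k
    have h0 : (ρ₁ j k - ρ₂ j k) ^ 2 ≤ ∑ k', (ρ₁ j k' - ρ₂ j k') ^ 2 :=
      Finset.single_le_sum (f := fun k' => (ρ₁ j k' - ρ₂ j k') ^ 2)
        (fun i _ => sq_nonneg _) (Finset.mem_univ k)
    have h1 : (∑ k', (ρ₁ j k' - ρ₂ j k') ^ 2)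
        ≤ ∑ j', ∑ k', (ρ₁ j' k' - ρ₂ j' k') ^ 2 :=
      Finset.single_le_sum (f := fun j' => ∑ k', (ρ₁ j' k' - ρ₂ j' k') ^ 2)
        (fun i _ => Finset.sum_nonneg fun k' _ => sq_nonneg _) (Finset.mem_univ j)
    calc |ρ₁ j k - ρ₂ j k| = Real.sqrt ((ρ₁ j k - ρ₂ j k) ^ 2) := (Real.sqrt_sq_eq_abs _).symm
      _ ≤ Real.sqrt (∑ j', (p₁ j' - p₂ j') ^ 2
          + ∑ j', ∑ k', (ρ₁ j' k' - ρ₂ j' k') ^ 2) := Real.sqrt_le_sqrt (by linarith)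
      _ ≤ δ := hclose.le
  have hpc' : ∀ j, |p₂ j - p₁ j| ≤ δ := fun j => by
    rw [abs_sub_comm]; exact hpc j
  have hρc' : ∀ j k, |ρ₂ j k - ρ₁ j k| ≤ δ := fun j k => by
    rw [abs_sub_comm]; exact hρc j k
  have hA := H p₁ p₂ ρ₁ ρ₂ hp₁ hp₂ hρ₁ hρ₂ hpc hρc
  have hB := H p₂ p₁ ρ₂ ρ₁ hp₂ hp₁ hρ₂ hρ₁ hpc' hρc'
  rw [abs_sub_lt_iff]
  constructor <;> linarith
end
end

section
/- For every n ∈ ℕ, every prefix d-semifaithful code C_n = (φ_n, f_n, g_n), every source distribution p ∈ P(A) and every distortion measure ρ ∈ D, the expected code length satisfies (1/n)·E_p[ l(f_n(φ_n(X^n)))·ln 2 ] ≥ E_p[R(T,d,ρ)] − (JK + J − 2)·(ln n)/n − (JK + J − 2)/n. -/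
open Filter MeasureTheory
open scoped BigOperators

noncomputable section

variable {A B : Type*}

lemma kraft_aux : ∀ (L : ℕ) (S : Finset (List Bool)),
    (∀ s ∈ S, s.length ≤ L) →
    (∀ s₁ ∈ S, ∀ s₂ ∈ S, s₁ <+: s₂ → s₁ = s₂) →
    ∑ s ∈ S, ((2:ℝ))⁻¹ ^ s.length ≤ 1 := by
  intro L
  induction L with
  | zero =>
    intro S hlen _
    have hsub : S ⊆ {([] : List Bool)} := by
      intro s hs
      simp [List.length_eq_zero_iff.mp (Nat.le_zero.mp (hlen s hs))]
    calc ∑ s ∈ S, ((2:ℝ))⁻¹ ^ s.length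
        ≤ ∑ s ∈ ({([] : List Bool)} : Finset (List Bool)), (2:ℝ)⁻¹ ^ s.length :=
          Finset.sum_le_sum_of_subset_of_nonneg hsub (by intros; positivity)
      _ = 1 := by simp
  | succ L ih =>
    intro S hlen hpre
    by_cases hnil : ([] : List Bool) ∈ S
    · have hsub : S ⊆ {([] : List Bool)} := by
        intro s hs
        have := hpre [] hnil s hs List.nil_prefix
        simp [← this]
      calc ∑ s ∈ S, ((2:ℝ))⁻¹ ^ s.length
          ≤ ∑ s ∈ ({([] : List Bool)} : Finset (List Bool)), (2:ℝ)⁻¹ ^ s.length :=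
            Finset.sum_le_sum_of_subset_of_nonneg hsub (by intros; positivity)
        _ = 1 := by simp
    · -- every s in S is nonempty
      have hne : ∀ s ∈ S, s ≠ [] := fun s hs h => hnil (h ▸ hs)
      -- split by head
      have hsplit : ∑ s ∈ S, ((2:ℝ))⁻¹ ^ s.length
          = ∑ s ∈ S.filter (fun s => s.head? = some false), ((2:ℝ))⁻¹ ^ s.length
            + ∑ s ∈ S.filter (fun s => ¬ (s.head? = some false)), ((2:ℝ))⁻¹ ^ s.length :=
        (Finset.sum_filter_add_sum_filter_not S _ _).symm
      have key : ∀ (b : Bool),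
          ∑ s ∈ S.filter (fun s => s.head? = some b), ((2:ℝ))⁻¹ ^ s.length ≤ 1/2 := by
        intro b
        set F := S.filter (fun s => s.head? = some b) with hF
        have hmem : ∀ s ∈ F, s.head? = some b ∧ s ∈ S := by
          intro s hs
          rw [hF, Finset.mem_filter] at hs
          exact ⟨hs.2, hs.1⟩
        have hcons : ∀ s ∈ F, b :: s.tail = s := fun s hs =>
          List.cons_head?_tail (hmem s hs).1
        have hinj : Set.InjOn List.tail (F : Set (List Bool)) := by
          intro s₁ h₁ s₂ h₂ h
          rw [← hcons s₁ h₁, ← hcons s₂ h₂, h]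
        have himg : ∑ t ∈ F.image List.tail, ((2:ℝ))⁻¹ ^ t.length
            = ∑ s ∈ F, ((2:ℝ))⁻¹ ^ s.tail.length := Finset.sum_image (fun x hx y hy h => hinj hx hy h)
        have hlen' : ∀ s ∈ F, s.length = s.tail.length + 1 := by
          intro s hs
          have := hcons s hs
          rw [← this]; simp
        have hih : ∑ t ∈ F.image List.tail, ((2:ℝ))⁻¹ ^ t.length ≤ 1 := by
          apply ih
          · intro t ht
            rcases Finset.mem_image.mp ht with ⟨s, hs, rfl⟩
            have h1 := hlen' s hs
            have h2 := hlen s (hmem s hs).2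
            omega
          · intro t₁ ht₁ t₂ ht₂ hp
            rcases Finset.mem_image.mp ht₁ with ⟨s₁, hs₁, rfl⟩
            rcases Finset.mem_image.mp ht₂ with ⟨s₂, hs₂, rfl⟩
            have : s₁ <+: s₂ := by
              rw [← hcons s₁ hs₁, ← hcons s₂ hs₂]
              exact List.cons_prefix_cons.mpr ⟨rfl, hp⟩
            rw [hpre s₁ (hmem s₁ hs₁).2 s₂ (hmem s₂ hs₂).2 this]
        calc ∑ s ∈ F, ((2:ℝ))⁻¹ ^ s.length
            = ∑ s ∈ F, (2:ℝ)⁻¹ * ((2:ℝ))⁻¹ ^ s.tail.length := by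
              apply Finset.sum_congr rfl
              intro s hs
              rw [hlen' s hs, pow_succ]; ring
          _ = (2:ℝ)⁻¹ * ∑ t ∈ F.image List.tail, ((2:ℝ))⁻¹ ^ t.length := by
              rw [himg, Finset.mul_sum]
          _ ≤ (2:ℝ)⁻¹ * 1 := by
              apply mul_le_mul_of_nonneg_left hih (by norm_num)
          _ = 1/2 := by norm_num
      have h2 : S.filter (fun s => ¬ (s.head? = some false))
          = S.filter (fun s => s.head? = some true) := by
        apply Finset.filter_congr
        intro s hs
        rcases s with _ | ⟨b, t⟩
        · exact absurd rfl (hne _ hs)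
        · cases b <;> simp
      rw [hsplit, h2]
      have := key false
      have := key true
      linarith



def cntP {n : ℕ} {A B : Type*} [DecidableEq A] [DecidableEq B]
    (x : Fin n → A) (y : Fin n → B) (j : A) (k : B) : ℕ :=
  (Finset.univ.filter fun i => x i = j ∧ y i = k).card

def rowc {n : ℕ} {A : Type*} [DecidableEq A] (x : Fin n → A) (j : A) : ℕ :=
  (Finset.univ.filter fun i => x i = j).card

lemma sum_fiber_single {n : ℕ} {A : Type*} [Fintype A] [DecidableEq A]
    (x : Fin n → A) (g : A → ℝ) :
    ∑ i, g (x i) = ∑ j, (rowc x j : ℝ) * g j := by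
  rw [← Finset.sum_fiberwise_of_maps_to (g := fun i => x i) (t := Finset.univ)
    (fun i _ => Finset.mem_univ _) (fun i => g (x i))]
  apply Finset.sum_congr rfl
  intro j _
  rw [Finset.sum_congr rfl (fun i hi => ?_), Finset.sum_const, nsmul_eq_mul, rowc]
  · rw [(Finset.mem_filter.mp hi).2]

lemma sum_fiber_pair {n : ℕ} {A B : Type*} [Fintype A] [Fintype B] [DecidableEq A] [DecidableEq B]
    (x : Fin n → A) (y : Fin n → B) (g : A → B → ℝ) :
    ∑ i, g (x i) (y i) = ∑ j, ∑ k, (cntP x y j k : ℝ) * g j k := by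
  rw [← Finset.sum_fiberwise_of_maps_to (g := fun i => (x i, y i)) (t := Finset.univ)
    (fun i _ => Finset.mem_univ _) (fun i => g (x i) (y i)), Fintype.sum_prod_type]
  apply Finset.sum_congr rfl
  intro j _
  apply Finset.sum_congr rfl
  intro k _
  rw [Finset.sum_congr rfl (fun i hi => ?_), Finset.sum_const, nsmul_eq_mul, cntP]
  · have : (Finset.univ.filter fun i => (x i, y i) = (j, k))
        = Finset.univ.filter fun i => x i = j ∧ y i = k := by
      ext i
      simp [Prod.ext_iff]
    rw [this]
  · have := (Finset.mem_filter.mp hi).2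
    rw [Prod.ext_iff] at this
    simp only at this
    rw [this.1, this.2]

lemma sum_cnt_k {n J K : ℕ} (x : Fin n → Fin J) (y : Fin n → Fin K) (j : Fin J) :
    ∑ k, cntP x y j k = rowc x j := by
  rw [rowc, Finset.card_eq_sum_card_fiberwise (f := y) (t := Finset.univ)
    (fun i _ => Finset.mem_univ _)]
  apply Finset.sum_congr rfl
  intro k _
  rw [cntP, Finset.filter_filter]

lemma sum_cnt_j {n J K : ℕ} (x : Fin n → Fin J) (y : Fin n → Fin K) (k : Fin K) :
    ∑ j, cntP x y j k = rowc y k := by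
  rw [rowc, Finset.card_eq_sum_card_fiberwise (f := x) (t := Finset.univ)
    (fun i _ => Finset.mem_univ _)]
  apply Finset.sum_congr rfl
  intro j _
  rw [cntP, Finset.filter_filter]
  congr 1
  apply Finset.filter_congr
  intro i _
  simp [and_comm]

lemma sum_rowc {n : ℕ} {A : Type*} [Fintype A] [DecidableEq A] (x : Fin n → A) :
    ∑ j, rowc x j = n := by
  have := Finset.card_eq_sum_card_fiberwise (f := x) (s := (Finset.univ : Finset (Fin n)))
    (t := Finset.univ) (fun i _ => Finset.mem_univ _)
  simp only [Finset.card_univ, Fintype.card_fin] at this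
  simp only [rowc]
  exact this.symm

lemma rowc_apply_pos {n : ℕ} {A : Type*} [DecidableEq A] (y : Fin n → A) (i : Fin n) :
    0 < rowc y (y i) :=
  Finset.card_pos.mpr ⟨i, Finset.mem_filter.mpr ⟨Finset.mem_univ i, rfl⟩⟩

lemma cntP_apply_pos {n : ℕ} {A B : Type*} [DecidableEq A] [DecidableEq B]
    (x : Fin n → A) (y : Fin n → B) (i : Fin n) :
    0 < cntP x y (x i) (y i) :=
  Finset.card_pos.mpr ⟨i, Finset.mem_filter.mpr ⟨Finset.mem_univ i, ⟨rfl, rfl⟩⟩⟩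

lemma cntP_le {n J K : ℕ} (x : Fin n → Fin J) (y : Fin n → Fin K) (j : Fin J) (k : Fin K) :
    cntP x y j k ≤ n := by
  calc cntP x y j k ≤ (Finset.univ : Finset (Fin n)).card := Finset.card_filter_le _ _
    _ = n := by simp

def Mfun {n J K : ℕ} (x : Fin n → Fin J) (y : Fin n → Fin K) : ℝ :=
  ∏ i, (cntP x y (x i) (y i) : ℝ) / (rowc y (y i) : ℝ)

lemma Mfun_pos {n J K : ℕ} (x : Fin n → Fin J) (y : Fin n → Fin K) : 0 < Mfun x y := by
  apply Finset.prod_pos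
  intro i _
  apply div_pos
  · exact_mod_cast cntP_apply_pos x y i
  · exact_mod_cast rowc_apply_pos y i

/-- Key counting bound: for fixed `y`, the sum of `Mfun x y` over any set of `x`'s
is at most `(n+1)^(J*K)`. -/
lemma sum_Mfun_le {n J K : ℕ} (y : Fin n → Fin K) (T : Finset (Fin n → Fin J)) :
    ∑ x ∈ T, Mfun x y ≤ ((n:ℝ)+1) ^ (J * K) := by
  classical
  set cfun : (Fin n → Fin J) → (Fin J × Fin K → ℕ) :=
    fun x => fun jk => cntP x y jk.1 jk.2 with hcfun
  have hgroup : ∑ x ∈ T, Mfun x y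
      = ∑ c ∈ T.image cfun, ∑ x ∈ T.filter (fun x => cfun x = c), Mfun x y := by
    rw [Finset.sum_fiberwise_of_maps_to (fun x hx => Finset.mem_image_of_mem cfun hx)]
  rw [hgroup]
  have hbound : ∀ c ∈ T.image cfun,
      ∑ x ∈ T.filter (fun x => cfun x = c), Mfun x y ≤ 1 := by
    intro c hc
    have h1 : ∑ x ∈ T.filter (fun x => cfun x = c), Mfun x y
        = ∑ x ∈ T.filter (fun x => cfun x = c), ∏ i, (c (x i, y i) : ℝ) / (rowc y (y i) : ℝ) := by
      apply Finset.sum_congr rfl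
      intro x hx
      have hxc := (Finset.mem_filter.mp hx).2
      rw [Mfun]
      apply Finset.prod_congr rfl
      intro i _
      rw [← hxc]
    rw [h1]
    have h2 : ∑ x ∈ T.filter (fun x => cfun x = c), ∏ i, (c (x i, y i) : ℝ) / (rowc y (y i) : ℝ)
        ≤ ∑ x : Fin n → Fin J, ∏ i, (c (x i, y i) : ℝ) / (rowc y (y i) : ℝ) := by
      apply Finset.sum_le_sum_of_subset_of_nonneg (Finset.subset_univ _)
      intro x _ _
      apply Finset.prod_nonneg
      intro i _
      positivity
    refine h2.trans ?_
    have h3 : ∑ x : Fin n → Fin J, ∏ i, (c (x i, y i) : ℝ) / (rowc y (y i) : ℝ)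
        = ∏ i, ∑ j, (c (j, y i) : ℝ) / (rowc y (y i) : ℝ) := by
      rw [Finset.prod_univ_sum (fun _ => Finset.univ) (fun i j => (c (j, y i) : ℝ) / (rowc y (y i) : ℝ))]
      rw [Fintype.piFinset_univ]
    rw [h3]
    -- columns of a realized c sum to the column counts of y
    rcases Finset.mem_image.mp hc with ⟨x₀, _, rfl⟩
    have h4 : ∀ i, ∑ j, (cfun x₀ (j, y i) : ℝ) / (rowc y (y i) : ℝ) = 1 := by
      intro i
      rw [← Finset.sum_div]
      have : ∑ j, ((cfun x₀ (j, y i) : ℝ)) = (rowc y (y i) : ℝ) := by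
        rw [hcfun]
        push_cast [← sum_cnt_j x₀ y (y i)]
        rfl
      rw [this, div_self]
      exact_mod_cast (rowc_apply_pos y i).ne'
    rw [Finset.prod_congr rfl (fun i _ => h4 i), Finset.prod_const_one]
  calc ∑ c ∈ T.image cfun, ∑ x ∈ T.filter (fun x => cfun x = c), Mfun x y
      ≤ ∑ c ∈ T.image cfun, (1:ℝ) := Finset.sum_le_sum hbound
    _ = ((T.image cfun).card : ℝ) := by rw [Finset.sum_const, nsmul_eq_mul, mul_one]
    _ ≤ ((n:ℝ)+1) ^ (J * K) := by
        have hcard : (T.image cfun).card ≤ (n+1) ^ (J * K) := by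
          have hinj : Set.InjOn (fun c : Fin J × Fin K → ℕ =>
              (fun jk => (⟨min (c jk) n, Nat.lt_succ_of_le (min_le_right _ _)⟩ : Fin (n+1))))
              ((T.image cfun) : Set (Fin J × Fin K → ℕ)) := by
            intro c₁ h₁ c₂ h₂ h
            rcases Finset.mem_coe.mp h₁ with h₁'
            rcases Finset.mem_image.mp h₁' with ⟨x₁, _, rfl⟩
            rcases Finset.mem_coe.mp h₂ with h₂'
            rcases Finset.mem_image.mp h₂' with ⟨x₂, _, rfl⟩
            funext jk
            have := congrFun h jk
            simp only [Fin.mk.injEq] at this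
            have e1 : min (cfun x₁ jk) n = cfun x₁ jk := min_eq_left (cntP_le x₁ y jk.1 jk.2)
            have e2 : min (cfun x₂ jk) n = cfun x₂ jk := min_eq_left (cntP_le x₂ y jk.1 jk.2)
            rw [e1, e2] at this
            exact this
          have := Finset.card_le_card_of_injOn _ (fun c _ => Finset.mem_univ _) hinj
          calc (T.image cfun).card ≤ (Finset.univ : Finset (Fin J × Fin K → Fin (n+1))).card := this
            _ = (n+1) ^ (J * K) := by
                rw [Finset.card_univ, Fintype.card_fun]
                simp [Fintype.card_prod]
        calc ((T.image cfun).card : ℝ) ≤ (((n+1) ^ (J * K) : ℕ) : ℝ) := by exact_mod_cast hcard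
          _ = ((n:ℝ)+1) ^ (J * K) := by push_cast; ring

lemma mutualInfo_nonneg [Fintype A] [Fintype B] {p : A → ℝ} {Q : A → B → ℝ}
    (hp : IsProb p) (hQ : IsCondProb Q) : 0 ≤ mutualInfo p Q := by
  have hr0 : ∀ j k, 0 ≤ p j * Q j k := fun j k => mul_nonneg (hp.1 j) ((hQ j).1 k)
  have hm0 : ∀ k, (0:ℝ) ≤ ∑ j', p j' * Q j' k := fun k =>
    Finset.sum_nonneg fun j _ => hr0 j k
  have key : ∀ j k, -(p j * Q j k * Real.log (Q j k / ∑ j', p j' * Q j' k))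
      ≤ p j * (∑ j', p j' * Q j' k) - p j * Q j k := by
    intro j k
    rcases eq_or_lt_of_le (hr0 j k) with h | h
    · rw [← h, zero_mul, neg_zero, sub_zero]
      exact mul_nonneg (hp.1 j) (hm0 k)
    · have hpj : 0 < p j := by
        rcases mul_pos_iff.mp h with ⟨h1, _⟩ | ⟨h1, _⟩
        · exact h1
        · exact absurd (hp.1 j) (not_le.mpr h1)
      have hQjk : 0 < Q j k := by
        rcases mul_pos_iff.mp h with ⟨_, h1⟩ | ⟨_, h1⟩
        · exact h1
        · exact absurd ((hQ j).1 k) (not_le.mpr h1)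
      have hmk : 0 < ∑ j', p j' * Q j' k :=
        lt_of_lt_of_le h (Finset.single_le_sum (fun j' _ => hr0 j' k) (Finset.mem_univ j))
      have hlog : Real.log ((∑ j', p j' * Q j' k) / Q j k)
          ≤ (∑ j', p j' * Q j' k) / Q j k - 1 :=
        Real.log_le_sub_one_of_pos (by positivity)
      have hneg : Real.log (Q j k / ∑ j', p j' * Q j' k)
          = - Real.log ((∑ j', p j' * Q j' k) / Q j k) := by
        rw [← Real.log_inv, inv_div]
      rw [hneg, mul_neg, neg_neg]
      have h2 : p j * Q j k * ((∑ j', p j' * Q j' k) / Q j k - 1)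
          = p j * (∑ j', p j' * Q j' k) - p j * Q j k := by
        field_simp
      calc p j * Q j k * Real.log ((∑ j', p j' * Q j' k) / Q j k)
          ≤ p j * Q j k * ((∑ j', p j' * Q j' k) / Q j k - 1) :=
            mul_le_mul_of_nonneg_left hlog (le_of_lt h)
        _ = p j * (∑ j', p j' * Q j' k) - p j * Q j k := h2
  have hsum : ∑ j, ∑ k, (p j * (∑ j', p j' * Q j' k) - p j * Q j k) = 0 := by
    have h1 : ∀ j, ∑ k, (p j * (∑ j', p j' * Q j' k) - p j * Q j k)
        = p j * (∑ k, ∑ j', p j' * Q j' k) - p j := by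
      intro j
      rw [Finset.sum_sub_distrib, ← Finset.mul_sum, ← Finset.mul_sum, (hQ j).2, mul_one]
    have h2 : ∑ k, ∑ j', p j' * Q j' k = 1 := by
      rw [Finset.sum_comm]
      calc ∑ j', ∑ k, p j' * Q j' k = ∑ j', p j' * ∑ k, Q j' k := by
            simp [Finset.mul_sum]
        _ = 1 := by
            simp_rw [fun j => (hQ j).2, mul_one]
            exact hp.2
    simp_rw [h1, h2, mul_one, Finset.sum_sub_distrib, hp.2, sub_self]
  have : - mutualInfo p Q ≤ 0 := by
    rw [mutualInfo, ← Finset.sum_neg_distrib]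
    calc ∑ j, -∑ k, p j * Q j k * Real.log (Q j k / ∑ j', p j' * Q j' k)
        = ∑ j, ∑ k, -(p j * Q j k * Real.log (Q j k / ∑ j', p j' * Q j' k)) := by
          simp [Finset.sum_neg_distrib]
      _ ≤ ∑ j, ∑ k, (p j * (∑ j', p j' * Q j' k) - p j * Q j k) :=
          Finset.sum_le_sum fun j _ => Finset.sum_le_sum fun k _ => key j k
      _ = 0 := hsum
  linarith


lemma typeOf_eq {n J : ℕ} (x : Fin n → Fin J) (j : Fin J) :
    typeOf x j = (rowc x j : ℝ) / n := rfl

lemma cntP_le_rowc {n J K : ℕ} (x : Fin n → Fin J) (y : Fin n → Fin K) (j : Fin J) (k : Fin K) :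
    cntP x y j k ≤ rowc x j :=
  Finset.card_le_card (by
    intro i hi
    rw [Finset.mem_filter] at hi ⊢
    exact ⟨hi.1, hi.2.1⟩)

lemma cntP_le_rowc' {n J K : ℕ} (x : Fin n → Fin J) (y : Fin n → Fin K) (j : Fin J) (k : Fin K) :
    cntP x y j k ≤ rowc y k :=
  Finset.card_le_card (by
    intro i hi
    rw [Finset.mem_filter] at hi ⊢
    exact ⟨hi.1, hi.2.2⟩)

lemma typeOf_isProb {n J : ℕ} (hn : 1 ≤ n) (x : Fin n → Fin J) : IsProb (typeOf x) := by
  have hn0 : (0:ℝ) < n := by exact_mod_cast hn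
  constructor
  · intro j
    rw [typeOf_eq]
    positivity
  · have h1 : ∑ j, typeOf x j = (∑ j, (rowc x j : ℝ)) / n := by
      rw [Finset.sum_div]
      exact Finset.sum_congr rfl fun j _ => typeOf_eq x j
    rw [h1, ← Nat.cast_sum, sum_rowc, div_self hn0.ne']

lemma key_pointwise {n J K : ℕ} (hn : 1 ≤ n) (hK : 0 < K) (d : ℝ)
    (ρ : Fin J → Fin K → ℝ)
    (x : Fin n → Fin J) (y : Fin n → Fin K)
    (hdist : nDist ρ x y ≤ d)
    (p : Fin J → ℝ) (hp : IsProb p) (hx : 0 < prodProb p x) :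
    (n:ℝ) * RD (typeOf x) d ρ ≤ Real.log (Mfun x y) - Real.log (prodProb p x) := by
  have hn0 : (0:ℝ) < n := by exact_mod_cast hn
  have hpx : ∀ i, 0 < p (x i) := by
    intro i
    rcases (hp.1 (x i)).lt_or_eq with h | h
    · exact h
    · exfalso
      have : prodProb p x = 0 := Finset.prod_eq_zero (Finset.mem_univ i) h.symm
      rw [this] at hx
      exact lt_irrefl 0 hx
  set k₀ : Fin K := ⟨0, hK⟩ with hk₀
  set Q : Fin J → Fin K → ℝ := fun j k =>
    if rowc x j = 0 then (if k = k₀ then 1 else 0)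
    else (cntP x y j k : ℝ) / (rowc x j : ℝ) with hQ
  have hQval : ∀ j k, rowc x j ≠ 0 → Q j k = (cntP x y j k : ℝ) / (rowc x j : ℝ) := by
    intro j k h
    simp only [hQ, h, if_false]
  have hQcond : IsCondProb Q := by
    intro j
    constructor
    · intro k
      by_cases h : rowc x j = 0
      · simp only [hQ, h, if_true]
        by_cases h2 : k = k₀ <;> simp [h2]
      · rw [hQval j k h]
        positivity
    · by_cases h : rowc x j = 0
      · simp [hQ, h]
      · rw [Finset.sum_congr rfl (fun k _ => hQval j k h), ← Finset.sum_div, ← Nat.cast_sum,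
          sum_cnt_k, div_self]
        exact_mod_cast h
  have hterm : ∀ j k, typeOf x j * Q j k = (cntP x y j k : ℝ) / n := by
    intro j k
    by_cases h : rowc x j = 0
    · have hc : cntP x y j k = 0 := Nat.le_zero.mp (h ▸ cntP_le_rowc x y j k)
      rw [typeOf_eq, h, hc]
      simp
    · rw [typeOf_eq, hQval j k h]
      have hr : (rowc x j : ℝ) ≠ 0 := by exact_mod_cast h
      field_simp
  have hmarg : ∀ k, ∑ j', typeOf x j' * Q j' k = (rowc y k : ℝ) / n := by
    intro k
    rw [Finset.sum_congr rfl (fun j _ => hterm j k), ← Finset.sum_div, ← Nat.cast_sum, sum_cnt_j]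
  have hfeas : avgDist (typeOf x) Q ρ ≤ d := by
    have heq : avgDist (typeOf x) Q ρ = nDist ρ x y := by
      rw [avgDist, nDist, sum_fiber_pair x y ρ, Finset.sum_div]
      apply Finset.sum_congr rfl
      intro j _
      rw [Finset.sum_div]
      apply Finset.sum_congr rfl
      intro k _
      rw [hterm]
      ring
    rw [heq]
    exact hdist
  have hRD : RD (typeOf x) d ρ ≤ mutualInfo (typeOf x) Q := by
    apply csInf_le
    · refine ⟨0, fun r hr => ?_⟩
      rcases hr with ⟨Q', hQ', _, rfl⟩
      exact mutualInfo_nonneg (typeOf_isProb hn x) hQ'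
    · exact ⟨Q, hQcond, hfeas, rfl⟩
  have hImain : (n:ℝ) * mutualInfo (typeOf x) Q
      = ∑ j, ∑ k, ((cntP x y j k : ℝ) * Real.log ((cntP x y j k : ℝ) / (rowc y k : ℝ))
          + (cntP x y j k : ℝ) * (Real.log n - Real.log (rowc x j))) := by
    rw [mutualInfo, Finset.mul_sum]
    apply Finset.sum_congr rfl
    intro j _
    rw [Finset.mul_sum]
    apply Finset.sum_congr rfl
    intro k _
    rw [hmarg k, hterm j k]
    by_cases hc : cntP x y j k = 0
    · simp [hc]
    · have hcpos : 0 < (cntP x y j k : ℝ) := by exact_mod_cast Nat.pos_of_ne_zero hc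
      have hrown : rowc x j ≠ 0 := by
        intro h0
        exact hc (Nat.le_zero.mp (h0 ▸ cntP_le_rowc x y j k))
      have hrow : 0 < (rowc x j : ℝ) := by
        exact_mod_cast Nat.pos_of_ne_zero hrown
      have hcol : 0 < (rowc y k : ℝ) := by
        have : 0 < rowc y k := lt_of_lt_of_le (Nat.pos_of_ne_zero hc) (cntP_le_rowc' x y j k)
        exact_mod_cast this
      rw [hQval j k hrown]
      have e1 : Real.log ((cntP x y j k : ℝ) / (rowc x j : ℝ) / ((rowc y k : ℝ) / n))
          = Real.log (cntP x y j k : ℝ) - Real.log (rowc x j : ℝ)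
            - (Real.log (rowc y k : ℝ) - Real.log n) := by
        rw [Real.log_div (by positivity) (by positivity),
          Real.log_div hcpos.ne' hrow.ne', Real.log_div hcol.ne' hn0.ne']
      rw [e1, Real.log_div hcpos.ne' hcol.ne']
      field_simp
      ring
  have hlogM : Real.log (Mfun x y)
      = ∑ j, ∑ k, (cntP x y j k : ℝ) * Real.log ((cntP x y j k : ℝ) / (rowc y k : ℝ)) := by
    rw [Mfun, Real.log_prod]
    · exact sum_fiber_pair x y (fun j k => Real.log ((cntP x y j k : ℝ) / (rowc y k : ℝ)))
    · intro i _
      have h1 : (0:ℝ) < (cntP x y (x i) (y i) : ℝ) := by exact_mod_cast cntP_apply_pos x y i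
      have h2 : (0:ℝ) < (rowc y (y i) : ℝ) := by exact_mod_cast rowc_apply_pos y i
      positivity
  have hsum2 : ∑ j, ∑ k, (cntP x y j k : ℝ) * (Real.log n - Real.log (rowc x j))
      = ∑ j, (rowc x j : ℝ) * (Real.log n - Real.log (rowc x j)) := by
    apply Finset.sum_congr rfl
    intro j _
    rw [← Finset.sum_mul, ← Nat.cast_sum, sum_cnt_k]
  have hlogP : Real.log (prodProb p x) = ∑ j, (rowc x j : ℝ) * Real.log (p j) := by
    rw [prodProb, Real.log_prod (fun i _ => (hpx i).ne')]
    exact sum_fiber_single x (fun j => Real.log (p j))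
  have hGibbs : ∑ j, (rowc x j : ℝ) * (Real.log n - Real.log (rowc x j))
      + ∑ j, (rowc x j : ℝ) * Real.log (p j) ≤ 0 := by
    have hterm2 : ∀ j ∈ Finset.univ, (rowc x j : ℝ) * (Real.log n - Real.log (rowc x j))
        + (rowc x j : ℝ) * Real.log (p j) ≤ (n:ℝ) * p j - (rowc x j : ℝ) := by
      intro j _
      by_cases h : rowc x j = 0
      · rw [h]
        simp only [Nat.cast_zero, zero_mul, add_zero, sub_zero]
        exact mul_nonneg hn0.le (hp.1 j)
      · have hrow : 0 < (rowc x j : ℝ) := by exact_mod_cast Nat.pos_of_ne_zero h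
        have hpj : 0 < p j := by
          rcases Finset.card_pos.mp (Nat.pos_of_ne_zero h) with ⟨i, hi⟩
          have hxi := (Finset.mem_filter.mp hi).2
          exact hxi ▸ hpx i
        have e : Real.log n - Real.log (rowc x j) + Real.log (p j)
            = Real.log ((n * p j) / (rowc x j : ℝ)) := by
          rw [Real.log_div (by positivity) hrow.ne', Real.log_mul hn0.ne' hpj.ne']
          ring
        have hle := Real.log_le_sub_one_of_pos (show (0:ℝ) < (n * p j) / (rowc x j : ℝ) by positivity)
        calc (rowc x j : ℝ) * (Real.log n - Real.log (rowc x j))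
              + (rowc x j : ℝ) * Real.log (p j)
            = (rowc x j : ℝ) * (Real.log ((n * p j) / (rowc x j : ℝ))) := by rw [← e]; ring
          _ ≤ (rowc x j : ℝ) * ((n * p j) / (rowc x j : ℝ) - 1) :=
              mul_le_mul_of_nonneg_left hle hrow.le
          _ = (n:ℝ) * p j - (rowc x j : ℝ) := by field_simp
    have hsum0 : ∑ j, ((n:ℝ) * p j - (rowc x j : ℝ)) = 0 := by
      rw [Finset.sum_sub_distrib, ← Finset.mul_sum, hp.2, mul_one, ← Nat.cast_sum, sum_rowc]
      ring
    calc ∑ j, (rowc x j : ℝ) * (Real.log n - Real.log (rowc x j))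
          + ∑ j, (rowc x j : ℝ) * Real.log (p j)
        = ∑ j, ((rowc x j : ℝ) * (Real.log n - Real.log (rowc x j))
            + (rowc x j : ℝ) * Real.log (p j)) := (Finset.sum_add_distrib).symm
      _ ≤ ∑ j, ((n:ℝ) * p j - (rowc x j : ℝ)) := Finset.sum_le_sum hterm2
      _ = 0 := hsum0
  have hfinal : (n:ℝ) * mutualInfo (typeOf x) Q
      ≤ Real.log (Mfun x y) - Real.log (prodProb p x) := by
    rw [hImain, hlogM, hlogP]
    have : ∑ j, ∑ k, ((cntP x y j k : ℝ) * Real.log ((cntP x y j k : ℝ) / (rowc y k : ℝ))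
          + (cntP x y j k : ℝ) * (Real.log n - Real.log (rowc x j)))
        = ∑ j, ∑ k, (cntP x y j k : ℝ) * Real.log ((cntP x y j k : ℝ) / (rowc y k : ℝ))
          + ∑ j, (rowc x j : ℝ) * (Real.log n - Real.log (rowc x j)) := by
      rw [← hsum2, ← Finset.sum_add_distrib]
      apply Finset.sum_congr rfl
      intro j _
      rw [← Finset.sum_add_distrib]
    rw [this]
    linarith [hGibbs]
  calc (n:ℝ) * RD (typeOf x) d ρ ≤ (n:ℝ) * mutualInfo (typeOf x) Q :=
        mul_le_mul_of_nonneg_left hRD hn0.le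
    _ ≤ Real.log (Mfun x y) - Real.log (prodProb p x) := hfinal

lemma mutualInfo_zero_t {J K : ℕ} (t : Fin J → ℝ) (ht : ∀ j, t j = 0)
    (Q : Fin J → Fin K → ℝ) : mutualInfo t Q = 0 := by
  rw [mutualInfo]
  apply Finset.sum_eq_zero
  intro j _
  apply Finset.sum_eq_zero
  intro k _
  rw [ht j, zero_mul, zero_mul]

lemma mutualInfo_single {K : ℕ} (t : Fin 1 → ℝ) (ht : ∀ j, t j = 1)
    (Q : Fin 1 → Fin K → ℝ) : mutualInfo t Q = 0 := by
  rw [mutualInfo]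
  apply Finset.sum_eq_zero
  intro j _
  apply Finset.sum_eq_zero
  intro k _
  have hm : ∑ j', t j' * Q j' k = Q j k := by
    rw [Fin.sum_univ_one, ht 0, one_mul]
    congr 1
    exact Subsingleton.elim 0 j
  rw [hm, ht j, one_mul]
  by_cases h : Q j k = 0
  · rw [h, zero_mul]
  · rw [div_self h, Real.log_one, mul_zero]

lemma RD_eq_zero {J K : ℕ} (hK : 0 < K) {d : ℝ} (hd : 0 ≤ d) (ρ : Fin J → Fin K → ℝ)
    (hρ : ∀ j, ∃ k, ρ j k = 0) (t : Fin J → ℝ)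
    (hall : ∀ Q : Fin J → Fin K → ℝ, IsCondProb Q → mutualInfo t Q = 0) :
    RD t d ρ = 0 := by
  classical
  set Q0 : Fin J → Fin K → ℝ :=
    fun j k => if k = Classical.choose (hρ j) then 1 else 0 with hQ0
  have hQ0cond : IsCondProb Q0 := by
    intro j
    constructor
    · intro k
      by_cases h : k = Classical.choose (hρ j) <;> simp [hQ0, h]
    · simp [hQ0]
  have hQ0dist : avgDist t Q0 ρ ≤ d := by
    have h1 : avgDist t Q0 ρ = ∑ j : Fin J, t j * ρ j (Classical.choose (hρ j)) := by
      rw [avgDist]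
      apply Finset.sum_congr rfl
      intro j _
      rw [Finset.sum_eq_single (Classical.choose (hρ j))]
      · simp [hQ0]
      · intro k _ hk
        simp [hQ0, hk]
      · intro h
        exact absurd (Finset.mem_univ _) h
    rw [h1]
    have h2 : ∀ j : Fin J, t j * ρ j (Classical.choose (hρ j)) = 0 := fun j => by
      rw [Classical.choose_spec (hρ j), mul_zero]
    rw [Finset.sum_congr rfl (fun j _ => h2 j), Finset.sum_const_zero]
    exact hd
  have hset : { r | ∃ Q, IsCondProb Q ∧ avgDist t Q ρ ≤ d ∧ r = mutualInfo t Q } = {0} := by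
    ext r
    simp only [Set.mem_setOf_eq, Set.mem_singleton_iff]
    constructor
    · rintro ⟨Q, hQ, _, rfl⟩
      exact hall Q hQ
    · rintro rfl
      exact ⟨Q0, hQ0cond, hQ0dist, (hall Q0 hQ0cond).symm⟩
  rw [RD, hset, csInf_singleton]

/-- Lemma 5: every prefix `d`-semifaithful code `C_n = (φ_n, f_n, g_n)`
satisfies, for every `n`, every source `p ∈ P(A)` and every `ρ ∈ D`,
`(1/n) E_p[l(f_n(φ_n(X^n))) ln 2] ≥ E_p[R(T,d,ρ)] − (JK+J−2)(ln n)/n − (JK+J−2)/n`. -/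
theorem prefix_code_lower_bound (J K : ℕ) (hJ : 0 < J) (hK : 0 < K)
    (ρmax : ℝ) (hρmax : 0 < ρmax) (d : ℝ) (hd : 0 < d)
    (n : ℕ)
    (φ : (Fin n → Fin J) → (Fin n → Fin K))
    (f : (Fin n → Fin K) → List Bool)
    (g : List Bool → (Fin n → Fin K))
    (ρ : Fin J → Fin K → ℝ) (hρ : IsDistMeasure ρmax ρ)
    -- d-semifaithful
    (hsemi : ∀ x, nDist ρ x (φ x) ≤ d)
    -- lossless binary encoder/decoder pair on the codebook
    (hdec : ∀ x, g (f (φ x)) = φ x)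
    -- prefix condition on the codebook
    (hpre : ∀ x₁ x₂, f (φ x₁) <+: f (φ x₂) → f (φ x₁) = f (φ x₂))
    (p : Fin J → ℝ) (hp : IsProb p) :
    (1 / (n : ℝ)) * ∑ x : Fin n → Fin J, prodProb p x * (((f (φ x)).length : ℝ) * Real.log 2)
      ≥ expTypeRD n p d ρ
        - ((J : ℝ) * K + J - 2) * (Real.log n / n)
        - ((J : ℝ) * K + J - 2) / n := by
  have hP0 : ∀ x : Fin n → Fin J, 0 ≤ prodProb p x :=
    fun x => Finset.prod_nonneg (fun i _ => hp.1 (x i))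
  have hlen0 : ∀ x : Fin n → Fin J, 0 ≤ prodProb p x * (((f (φ x)).length : ℝ) * Real.log 2) :=
    fun x => mul_nonneg (hP0 x) (mul_nonneg (Nat.cast_nonneg _) (Real.log_nonneg one_le_two))
  rcases Nat.eq_zero_or_pos n with hn | hn
  · -- n = 0 case
    subst hn
    have hRD0 : ∀ x : Fin 0 → Fin J, RD (typeOf x) d ρ = 0 := by
      intro x
      apply RD_eq_zero hK hd.le ρ hρ.2
      intro Q hQ
      apply mutualInfo_zero_t
      intro j
      rw [typeOf_eq]
      simp
    have hexp : expTypeRD 0 p d ρ = 0 := by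
      rw [expTypeRD]
      apply Finset.sum_eq_zero
      intro x _
      rw [hRD0 x, mul_zero]
    rw [hexp]
    simp
  · -- n ≥ 1
    have hn0 : (0:ℝ) < n := by exact_mod_cast hn
    have hC0 : (0:ℝ) ≤ (J : ℝ) * K + J - 2 := by
      have h1 : (1:ℝ) ≤ (J:ℝ) := by exact_mod_cast hJ
      have h2 : (1:ℝ) ≤ (K:ℝ) := by exact_mod_cast hK
      nlinarith
    have hlogn : (0:ℝ) ≤ Real.log n :=
      Real.log_nonneg (by exact_mod_cast hn)
    rcases eq_or_lt_of_le (show 1 ≤ J from hJ) with hJ1 | hJ2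
    · -- J = 1 case
      have hJ1' : J = 1 := hJ1.symm
      subst hJ1'
      have hRD0 : ∀ x : Fin n → Fin 1, RD (typeOf x) d ρ = 0 := by
        intro x
        apply RD_eq_zero hK hd.le ρ hρ.2
        intro Q hQ
        apply mutualInfo_single
        intro j
        rw [typeOf_eq]
        have hfull : Finset.univ.filter (fun i => x i = j) = Finset.univ := by
          apply Finset.filter_true_of_mem
          intro i _
          exact Subsingleton.elim (x i) j
        rw [rowc, hfull]
        simp only [Finset.card_univ, Fintype.card_fin]
        exact div_self hn0.ne'
      have hexp : expTypeRD n p d ρ = 0 := by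
        rw [expTypeRD]
        apply Finset.sum_eq_zero
        intro x _
        rw [hRD0 x, mul_zero]
      rw [hexp]
      have hLHS : 0 ≤ (1 / (n : ℝ)) * ∑ x : Fin n → Fin 1,
          prodProb p x * (((f (φ x)).length : ℝ) * Real.log 2) :=
        mul_nonneg (by positivity) (Finset.sum_nonneg fun x _ => hlen0 x)
      have h1 : (0:ℝ) ≤ ((1 : ℝ) * K + 1 - 2) * (Real.log n / n) := by
        have : (0:ℝ) ≤ (1 : ℝ) * K + 1 - 2 := by
          have h2 : (1:ℝ) ≤ (K:ℝ) := by exact_mod_cast hK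
          nlinarith
        positivity
      have h2 : (0:ℝ) ≤ ((1 : ℝ) * K + 1 - 2) / n := by
        have : (0:ℝ) ≤ (1 : ℝ) * K + 1 - 2 := by
          have h2 : (1:ℝ) ≤ (K:ℝ) := by exact_mod_cast hK
          nlinarith
        positivity
      push_cast at h1 h2 ⊢
      linarith
    · -- main case: 1 < J, 1 ≤ n
      have hJ2' : (2:ℝ) ≤ (J:ℝ) := by exact_mod_cast hJ2
      have hK1 : (1:ℝ) ≤ (K:ℝ) := by exact_mod_cast hK
      set C : ℝ := (J : ℝ) * K + J - 2 with hCdef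
      -- Kraft's inequality for the codebook
      set S : Finset (List Bool) := Finset.image (fun x : Fin n → Fin J => f (φ x)) Finset.univ
        with hSdef
      have hkraft : ∑ s ∈ S, ((2:ℝ))⁻¹ ^ s.length ≤ 1 := by
        apply kraft_aux (Finset.univ.sup (fun x : Fin n → Fin J => (f (φ x)).length))
        · intro s hs
          rcases Finset.mem_image.mp hs with ⟨x, _, rfl⟩
          exact Finset.le_sup (f := fun x : Fin n → Fin J => (f (φ x)).length) (Finset.mem_univ x)
        · intro s₁ h₁ s₂ h₂ hp12
          rcases Finset.mem_image.mp h₁ with ⟨x₁, _, rfl⟩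
          rcases Finset.mem_image.mp h₂ with ⟨x₂, _, rfl⟩
          exact hpre x₁ x₂ hp12
      -- the counting bound over all sequences
      have hstep2 : ∑ x : Fin n → Fin J, Mfun x (φ x) * (2:ℝ)⁻¹ ^ (f (φ x)).length
          ≤ ((n:ℝ)+1)^(J*K) := by
        rw [← Finset.sum_fiberwise_of_maps_to (g := fun x : Fin n → Fin J => f (φ x)) (t := S)
          (fun x _ => Finset.mem_image_of_mem _ (Finset.mem_univ x))
          (fun x => Mfun x (φ x) * (2:ℝ)⁻¹ ^ (f (φ x)).length)]
        have hinner : ∀ s ∈ S,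
            ∑ x ∈ Finset.univ.filter (fun x : Fin n → Fin J => f (φ x) = s),
              Mfun x (φ x) * (2:ℝ)⁻¹ ^ (f (φ x)).length
            ≤ (2:ℝ)⁻¹ ^ s.length * ((n:ℝ)+1)^(J*K) := by
          intro s hs
          have heq : ∑ x ∈ Finset.univ.filter (fun x : Fin n → Fin J => f (φ x) = s),
              Mfun x (φ x) * (2:ℝ)⁻¹ ^ (f (φ x)).length
              = (2:ℝ)⁻¹ ^ s.length *
                ∑ x ∈ Finset.univ.filter (fun x : Fin n → Fin J => f (φ x) = s), Mfun x (g s) := by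
            rw [Finset.mul_sum]
            apply Finset.sum_congr rfl
            intro x hx
            have hfx := (Finset.mem_filter.mp hx).2
            have hφ : φ x = g s := by rw [← hfx, hdec x]
            rw [hfx, hφ]
            ring
          rw [heq]
          exact mul_le_mul_of_nonneg_left (sum_Mfun_le (g s) _) (by positivity)
        calc ∑ s ∈ S, ∑ x ∈ Finset.univ.filter (fun x : Fin n → Fin J => f (φ x) = s),
              Mfun x (φ x) * (2:ℝ)⁻¹ ^ (f (φ x)).length
            ≤ ∑ s ∈ S, (2:ℝ)⁻¹ ^ s.length * ((n:ℝ)+1)^(J*K) := Finset.sum_le_sum hinner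
          _ = (∑ s ∈ S, (2:ℝ)⁻¹ ^ s.length) * ((n:ℝ)+1)^(J*K) := by rw [Finset.sum_mul]
          _ ≤ 1 * ((n:ℝ)+1)^(J*K) :=
              mul_le_mul_of_nonneg_right hkraft (by positivity)
          _ = ((n:ℝ)+1)^(J*K) := one_mul _
      -- the support of the product measure
      have hPsum : ∑ x : Fin n → Fin J, prodProb p x = 1 := by
        have h1 : ∏ i : Fin n, ∑ a : Fin J, p a
            = ∑ x ∈ Fintype.piFinset (fun _ : Fin n => (Finset.univ : Finset (Fin J))),
              ∏ i, p (x i) := Finset.prod_univ_sum _ _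
        rw [Fintype.piFinset_univ] at h1
        calc ∑ x : Fin n → Fin J, prodProb p x = ∏ i : Fin n, ∑ a, p a := h1.symm
          _ = 1 := by rw [Finset.prod_congr rfl (fun i _ => hp.2), Finset.prod_const_one]
      set supp := Finset.univ.filter (fun x : Fin n → Fin J => 0 < prodProb p x) with hsuppdef
      have hsuppsum : ∑ x ∈ supp, prodProb p x = 1 := by
        rw [← hPsum]
        exact Finset.sum_filter_of_ne (fun x _ hne => lt_of_le_of_ne (hP0 x) (Ne.symm hne))
      set T : ℝ := ∑ x ∈ supp, Mfun x (φ x) * (2:ℝ)⁻¹ ^ (f (φ x)).length with hTdef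
      have hsuppne : supp.Nonempty := by
        by_contra h
        rw [Finset.not_nonempty_iff_eq_empty] at h
        rw [h, Finset.sum_empty] at hsuppsum
        norm_num at hsuppsum
      have hTpos : 0 < T := by
        rw [hTdef]
        apply Finset.sum_pos (fun x _ => mul_pos (Mfun_pos _ _) (by positivity)) hsuppne
      have hTle : T ≤ ((n:ℝ)+1)^(J*K) := by
        rw [hTdef]
        refine le_trans (Finset.sum_le_sum_of_subset_of_nonneg (Finset.filter_subset _ _)
          (fun x _ _ => le_of_lt (mul_pos (Mfun_pos _ _) (by positivity)))) hstep2
      -- pointwise bound on the support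
      have hmain : ∀ x ∈ supp,
          prodProb p x * ((n:ℝ) * RD (typeOf x) d ρ)
            - prodProb p x * Real.log (Mfun x (φ x) * (2:ℝ)⁻¹ ^ (f (φ x)).length / prodProb p x)
          ≤ prodProb p x * (((f (φ x)).length : ℝ) * Real.log 2) := by
        intro x hx
        have hxpos : 0 < prodProb p x := (Finset.mem_filter.mp hx).2
        have hM := Mfun_pos x (φ x)
        have hw : (0:ℝ) < (2:ℝ)⁻¹ ^ (f (φ x)).length := by positivity
        have hkey := key_pointwise hn hK d ρ x (φ x) (hsemi x) p hp hxpos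
        have hlogZ : Real.log (Mfun x (φ x) * (2:ℝ)⁻¹ ^ (f (φ x)).length / prodProb p x)
            = Real.log (Mfun x (φ x)) + Real.log ((2:ℝ)⁻¹ ^ (f (φ x)).length)
              - Real.log (prodProb p x) := by
          rw [Real.log_div (by positivity) hxpos.ne', Real.log_mul hM.ne' hw.ne']
        have hloglen : Real.log ((2:ℝ)⁻¹ ^ (f (φ x)).length)
            = -(((f (φ x)).length : ℝ) * Real.log 2) := by
          rw [Real.log_pow, Real.log_inv]
          push_cast
          ring
        have h1 : ((f (φ x)).length : ℝ) * Real.log 2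
            = (Real.log (Mfun x (φ x)) - Real.log (prodProb p x))
              - Real.log (Mfun x (φ x) * (2:ℝ)⁻¹ ^ (f (φ x)).length / prodProb p x) := by
          rw [hlogZ, hloglen]
          ring
        have h2 := mul_le_mul_of_nonneg_left hkey hxpos.le
        rw [h1, mul_sub]
        linarith
      -- Jensen-type bound
      have hJensen : ∑ x ∈ supp, prodProb p x *
          Real.log (Mfun x (φ x) * (2:ℝ)⁻¹ ^ (f (φ x)).length / prodProb p x)
          ≤ Real.log T := by
        have hstep : ∀ x ∈ supp, prodProb p x *
            Real.log (Mfun x (φ x) * (2:ℝ)⁻¹ ^ (f (φ x)).length / prodProb p x)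
            ≤ Mfun x (φ x) * (2:ℝ)⁻¹ ^ (f (φ x)).length / T - prodProb p x
              + prodProb p x * Real.log T := by
          intro x hx
          have hxpos : 0 < prodProb p x := (Finset.mem_filter.mp hx).2
          have hM := Mfun_pos x (φ x)
          have hw : (0:ℝ) < (2:ℝ)⁻¹ ^ (f (φ x)).length := by positivity
          set Z : ℝ := Mfun x (φ x) * (2:ℝ)⁻¹ ^ (f (φ x)).length / prodProb p x with hZdef
          have hZpos : 0 < Z := div_pos (mul_pos hM hw) hxpos
          have hsplit : Real.log Z = Real.log (Z / T) + Real.log T := by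
            rw [Real.log_div hZpos.ne' hTpos.ne']
            ring
          have hle := Real.log_le_sub_one_of_pos (div_pos hZpos hTpos)
          have h3 : prodProb p x * Real.log Z
              ≤ prodProb p x * (Z / T - 1 + Real.log T) := by
            rw [hsplit]
            apply mul_le_mul_of_nonneg_left _ hxpos.le
            linarith
          have h4 : prodProb p x * Z = Mfun x (φ x) * (2:ℝ)⁻¹ ^ (f (φ x)).length := by
            rw [hZdef, mul_div_cancel₀]
            exact hxpos.ne'
          calc prodProb p x * Real.log Z ≤ prodProb p x * (Z / T - 1 + Real.log T) := h3
            _ = prodProb p x * Z / T - prodProb p x + prodProb p x * Real.log T := by ring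
            _ = Mfun x (φ x) * (2:ℝ)⁻¹ ^ (f (φ x)).length / T - prodProb p x
                + prodProb p x * Real.log T := by rw [h4]
        calc ∑ x ∈ supp, prodProb p x *
              Real.log (Mfun x (φ x) * (2:ℝ)⁻¹ ^ (f (φ x)).length / prodProb p x)
            ≤ ∑ x ∈ supp, (Mfun x (φ x) * (2:ℝ)⁻¹ ^ (f (φ x)).length / T - prodProb p x
              + prodProb p x * Real.log T) := Finset.sum_le_sum hstep
          _ = (∑ x ∈ supp, Mfun x (φ x) * (2:ℝ)⁻¹ ^ (f (φ x)).length) / T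
              - ∑ x ∈ supp, prodProb p x
              + (∑ x ∈ supp, prodProb p x) * Real.log T := by
              rw [Finset.sum_add_distrib, Finset.sum_sub_distrib, Finset.sum_div,
                Finset.sum_mul]
          _ = Real.log T := by
              rw [← hTdef, hsuppsum, div_self hTpos.ne']
              ring
      -- restrict sums to the support
      have hsplitlen : ∑ x : Fin n → Fin J, prodProb p x * (((f (φ x)).length : ℝ) * Real.log 2)
          = ∑ x ∈ supp, prodProb p x * (((f (φ x)).length : ℝ) * Real.log 2) := by
        symm
        apply Finset.sum_filter_of_ne
        intro x _ hne
        by_contra h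
        push_neg at h
        have : prodProb p x = 0 := le_antisymm h (hP0 x)
        rw [this, zero_mul] at hne
        exact hne rfl
      have hsplitexp : expTypeRD n p d ρ = ∑ x ∈ supp, prodProb p x * RD (typeOf x) d ρ := by
        rw [expTypeRD]
        symm
        apply Finset.sum_filter_of_ne
        intro x _ hne
        by_contra h
        push_neg at h
        have : prodProb p x = 0 := le_antisymm h (hP0 x)
        rw [this, zero_mul] at hne
        exact hne rfl
      -- comparison of logs
      have hlogT : Real.log T ≤ C * (Real.log n + 1) := by
        have h1 : Real.log T ≤ Real.log (((n:ℝ)+1)^(J*K)) :=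
          Real.log_le_log hTpos hTle
        have h2 : Real.log (((n:ℝ)+1)^(J*K)) = (J*K : ℕ) * Real.log ((n:ℝ)+1) := by
          rw [Real.log_pow]
        have h3 : Real.log ((n:ℝ)+1) ≤ Real.log n + 1 := by
          have ha : (n:ℝ)+1 ≤ 2*n := by linarith [hn0, (show (1:ℝ) ≤ n by exact_mod_cast hn)]
          have hb : Real.log ((n:ℝ)+1) ≤ Real.log (2*n) :=
            Real.log_le_log (by positivity) ha
          have hc : Real.log (2*(n:ℝ)) = Real.log 2 + Real.log n :=
            Real.log_mul two_ne_zero hn0.ne'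
          have hdd : Real.log 2 ≤ 1 := by
            have := Real.log_le_sub_one_of_pos (show (0:ℝ) < 2 by norm_num)
            linarith
          linarith
        have h4 : ((J*K : ℕ) : ℝ) ≤ C := by
          push_cast
          rw [hCdef]
          nlinarith
        have h5 : (0:ℝ) ≤ Real.log ((n:ℝ)+1) := Real.log_nonneg (by linarith)
        calc Real.log T ≤ (J*K : ℕ) * Real.log ((n:ℝ)+1) := by rw [← h2]; exact h1
          _ ≤ C * Real.log ((n:ℝ)+1) := mul_le_mul_of_nonneg_right h4 h5
          _ ≤ C * (Real.log n + 1) := mul_le_mul_of_nonneg_left h3 (by rw [hCdef]; nlinarith)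
      -- put everything together
      have hfinal : (n:ℝ) * expTypeRD n p d ρ - C * (Real.log n + 1)
          ≤ ∑ x : Fin n → Fin J, prodProb p x * (((f (φ x)).length : ℝ) * Real.log 2) := by
        rw [hsplitlen, hsplitexp]
        have hsum1 : ∑ x ∈ supp, (prodProb p x * ((n:ℝ) * RD (typeOf x) d ρ)
            - prodProb p x * Real.log (Mfun x (φ x) * (2:ℝ)⁻¹ ^ (f (φ x)).length / prodProb p x))
            ≤ ∑ x ∈ supp, prodProb p x * (((f (φ x)).length : ℝ) * Real.log 2) :=
          Finset.sum_le_sum hmain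
        have hsum2 : ∑ x ∈ supp, (prodProb p x * ((n:ℝ) * RD (typeOf x) d ρ)
            - prodProb p x * Real.log (Mfun x (φ x) * (2:ℝ)⁻¹ ^ (f (φ x)).length / prodProb p x))
            = (n:ℝ) * ∑ x ∈ supp, prodProb p x * RD (typeOf x) d ρ
              - ∑ x ∈ supp, prodProb p x *
                Real.log (Mfun x (φ x) * (2:ℝ)⁻¹ ^ (f (φ x)).length / prodProb p x) := by
          rw [Finset.sum_sub_distrib, Finset.mul_sum]
          congr 1
          apply Finset.sum_congr rfl
          intro x _
          ring
        rw [hsum2] at hsum1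
        linarith [hJensen, hlogT]
      rw [ge_iff_le]
      have hkey2 : expTypeRD n p d ρ - C * (Real.log (n:ℝ) / n) - C / n
          ≤ (1 / (n:ℝ)) * ((n:ℝ) * expTypeRD n p d ρ - C * (Real.log n + 1)) := by
        generalize expTypeRD n p d ρ = E
        generalize Real.log (n:ℝ) = L
        have hne : (n:ℝ) ≠ 0 := hn0.ne'
        have heq : (1 / (n:ℝ)) * ((n:ℝ) * E - C * (L + 1)) = E - C * (L / n) - C / n := by
          field_simp
          ring
        rw [heq]
      exact le_trans hkey2 (mul_le_mul_of_nonneg_left hfinal (by positivity))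
end
end
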